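/- arXiv:1703.04085 — 9 statements merged into one kernel-verified Lean document; each statement's English description precedes it below -/
import Mathlib

section
/- For all complex numbers A₁, A₂ and every real σ ≥ 1/2, one has ||A₁|^{2σ}·A₁ − |A₂|^{2σ}·A₂| ≤ (4σ−1)·(|A₁|^{2σ} + |A₂|^{2σ})·|A₁ − A₂|. -/
lemma aux_rpow_sub (x y p : ℝ) (hy : 0 ≤ y) (hxy : y ≤ x) (hp : 1 ≤ p) :
    x ^ p - y ^ p ≤ p * x ^ (p-1) * (x - y) := by
  have hx : 0 ≤ x := hy.trans hxy
  rcases eq_or_lt_of_le hx with h0 | h0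
  · have hy0 : y = 0 := le_antisymm (by linarith) hy
    have hp0 : p ≠ 0 := by linarith
    simp [← h0, hy0, Real.zero_rpow hp0]
  · set s := y / x with hs
    have hs1 : -1 ≤ s - 1 := by
      have : 0 ≤ s := div_nonneg hy h0.le
      linarith
    have hb := one_add_mul_self_le_rpow_one_add hs1 hp
    have hsx : y = s * x := by rw [hs, div_mul_cancel₀ _ h0.ne']
    have hyp : y ^ p = s ^ p * x ^ p := by
      rw [hsx, Real.mul_rpow (div_nonneg hy h0.le) hx]
    have h1s : (1 + (s-1)) ^ p = s ^ p := by ring_nf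
    rw [h1s] at hb
    have hxp : x ^ p = x ^ (p-1) * x := by
      rw [← Real.rpow_add_one h0.ne' (p-1)]; ring_nf
    have hxp_pos : 0 ≤ x ^ p := Real.rpow_nonneg hx p
    have hb2 := mul_le_mul_of_nonneg_right hb hxp_pos
    rw [← hyp] at hb2
    calc x ^ p - y ^ p ≤ p * (1 - s) * x ^ p := by linarith
      _ = p * x ^ (p-1) * (x - y) := by rw [hxp, hsx]; ring

lemma aux_young (x y p : ℝ) (hy : 0 ≤ y) (hx : 0 ≤ x) (hp : 1 ≤ p) :
    p * x ^ (p-1) * y ≤ (p-1) * x ^ p + y ^ p := by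
  have hp0 : (0:ℝ) < p := by linarith
  have hgm := Real.geom_mean_le_arith_mean2_weighted
    (w₁ := (p-1)/p) (w₂ := 1/p) (p₁ := x ^ p) (p₂ := y ^ p)
    (div_nonneg (by linarith) hp0.le) (by positivity)
    (Real.rpow_nonneg hx p) (Real.rpow_nonneg hy p) (by field_simp; ring)
  have h1 : (x ^ p) ^ ((p-1)/p) = x ^ (p-1) := by
    rw [← Real.rpow_mul hx]
    congr 1
    field_simp
  have h2 : (y ^ p) ^ (1/p) = y := by
    rw [← Real.rpow_mul hy, mul_one_div, div_self hp0.ne', Real.rpow_one]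
  rw [h1, h2] at hgm
  have := mul_le_mul_of_nonneg_left hgm hp0.le
  calc p * x ^ (p-1) * y = p * (x ^ (p-1) * y) := by ring
    _ ≤ p * ((p-1)/p * x ^ p + 1/p * y ^ p) := this
    _ = (p-1) * x ^ p + y ^ p := by field_simp

lemma aux_main (A₁ A₂ : ℂ) (σ : ℝ) (hσ : 1/2 ≤ σ)
    (hle : ‖A₂‖ ≤ ‖A₁‖) :
    ‖((‖A₁‖ ^ (2*σ) : ℝ) : ℂ) * A₁ -
        ((‖A₂‖ ^ (2*σ) : ℝ) : ℂ) * A₂‖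
      ≤ (4*σ - 1) * (‖A₁‖ ^ (2*σ) + ‖A₂‖ ^ (2*σ)) *
        ‖A₁ - A₂‖ := by
  set x := ‖A₁‖ with hx
  set y := ‖A₂‖ with hy
  set p := 2*σ with hpdef
  have hp : 1 ≤ p := by simp [hpdef]; linarith
  have hxnn : 0 ≤ x := norm_nonneg _
  have hynn : 0 ≤ y := norm_nonneg _
  set d := ‖A₁ - A₂‖ with hd
  have hdnn : 0 ≤ d := norm_nonneg _
  have hxyd : x - y ≤ d := by
    have h1 : x ≤ d + y := by
      calc x = ‖(A₁ - A₂) + A₂‖ := by rw [sub_add_cancel]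
        _ ≤ d + y := norm_add_le _ _
    linarith
  have hxpnn : 0 ≤ x ^ p := Real.rpow_nonneg hxnn p
  have hypnn : 0 ≤ y ^ p := Real.rpow_nonneg hynn p
  have hsub : 0 ≤ x ^ p - y ^ p := by
    have := Real.rpow_le_rpow hynn hle (by linarith : 0 ≤ p)
    linarith
  -- split the difference
  have hsplit : ((x ^ p : ℝ) : ℂ) * A₁ - ((y ^ p : ℝ) : ℂ) * A₂
      = ((x ^ p : ℝ) : ℂ) * (A₁ - A₂) + (((x ^ p - y ^ p : ℝ)) : ℂ) * A₂ := by
    push_cast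
    ring
  have step1 : ‖((x ^ p : ℝ) : ℂ) * A₁ - ((y ^ p : ℝ) : ℂ) * A₂‖
      ≤ x ^ p * d + (x ^ p - y ^ p) * y := by
    rw [hsplit]
    refine (norm_add_le _ _).trans ?_
    rw [norm_mul, norm_mul, Complex.norm_real, Complex.norm_real,
      Real.norm_of_nonneg hxpnn, Real.norm_of_nonneg hsub]
  refine step1.trans ?_
  -- real estimates
  have h2 : (x ^ p - y ^ p) * y ≤ ((p-1) * x ^ p + y ^ p) * d := by
    calc (x ^ p - y ^ p) * y ≤ (p * x ^ (p-1) * (x - y)) * y :=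
          mul_le_mul_of_nonneg_right (aux_rpow_sub x y p hynn hle hp) hynn
      _ = (p * x ^ (p-1) * y) * (x - y) := by ring
      _ ≤ ((p-1) * x ^ p + y ^ p) * (x - y) := by
          apply mul_le_mul_of_nonneg_right (aux_young x y p hynn hxnn hp)
          linarith
      _ ≤ ((p-1) * x ^ p + y ^ p) * d := by
          apply mul_le_mul_of_nonneg_left hxyd
          nlinarith
  have hfinal : x ^ p * d + ((p-1) * x ^ p + y ^ p) * d
      ≤ (4*σ - 1) * (x ^ p + y ^ p) * d := by
    have h4 : 4*σ - 1 = 2*p - 1 := by rw [hpdef]; ring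
    rw [h4]
    nlinarith [mul_le_mul_of_nonneg_right hxpnn hdnn, mul_nonneg hypnn hdnn,
      mul_nonneg (mul_nonneg (by linarith : (0:ℝ) ≤ p - 1) hxpnn) hdnn,
      mul_nonneg hxpnn hdnn]
  linarith

/-- For complex numbers `A₁, A₂` and real `σ ≥ 1/2`,
`||A₁|^{2σ} A₁ - |A₂|^{2σ} A₂| ≤ (4σ-1)(|A₁|^{2σ} + |A₂|^{2σ}) |A₁ - A₂|`. -/
theorem abs_rpow_mul_sub_le (A₁ A₂ : ℂ) (σ : ℝ) (hσ : 1/2 ≤ σ) :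
    ‖((‖A₁‖ ^ (2*σ) : ℝ) : ℂ) * A₁ -
        ((‖A₂‖ ^ (2*σ) : ℝ) : ℂ) * A₂‖
      ≤ (4*σ - 1) * (‖A₁‖ ^ (2*σ) + ‖A₂‖ ^ (2*σ)) *
        ‖A₁ - A₂‖ := by
  rcases le_total (‖A₂‖) (‖A₁‖) with h | h
  · exact aux_main A₁ A₂ σ hσ h
  · have h1 := aux_main A₂ A₁ σ hσ h
    rw [norm_sub_rev A₂ A₁, norm_sub_rev (((‖A₂‖ ^ (2*σ) : ℝ) : ℂ) * A₂),
      add_comm (‖A₂‖ ^ (2*σ))] at h1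
    exact h1
end

section
/- For all complex numbers A₁, A₂, one has Re[(𝓕(A₁) − 𝓕(A₂))·conj(A₁ − A₂)] ≤ 0. -/
lemma aux (p q r s : ℝ) (hp : 0 ≤ p) (hq : 0 ≤ q) (h : r^2 + s^2 = p*q) :
    (p+q)*r + (p-q)*s ≤ p^2 + q^2 := by
  nlinarith [sq_nonneg ((p+q)*s - (p-q)*r), sq_nonneg (p-q), sq_nonneg (p+q),
    mul_nonneg hp hq, sq_nonneg ((p+q)*r + (p-q)*s + p^2 + q^2)]

/-- The cubic Ginzburg–Landau nonlinearity `𝓕(A) = (-1+i)|A|²A`. -/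
noncomputable def cubicGL (z : ℂ) : ℂ :=
  (-1 + Complex.I) * ((‖z‖ : ℝ) : ℂ)^2 * z

/-- `Re[(𝓕(A₁) - 𝓕(A₂)) ⬝ conj(A₁ - A₂)] ≤ 0`. -/
theorem re_cubicGL_diff_mul_conj_nonpos (A₁ A₂ : ℂ) :
    ((cubicGL A₁ - cubicGL A₂) * (starRingEnd ℂ) (A₁ - A₂)).re ≤ 0 := by
  obtain ⟨a, b⟩ := A₁
  obtain ⟨c, d⟩ := A₂
  simp only [cubicGL, ← Complex.ofReal_pow, Complex.sq_norm, Complex.normSq_mk]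
  simp only [Complex.sub_re, Complex.sub_im, Complex.mul_re, Complex.mul_im,
    Complex.add_re, Complex.add_im, Complex.I_re, Complex.I_im, Complex.neg_re,
    Complex.neg_im, Complex.one_re, Complex.one_im, Complex.ofReal_re,
    Complex.ofReal_im, Complex.conj_re, Complex.conj_im]
  nlinarith [aux (a^2+b^2) (c^2+d^2) (a*c+b*d) (b*c-a*d)
      (by positivity) (by positivity) (by ring),
    aux (a^2+b^2) (c^2+d^2) (a*c+b*d) (a*d-b*c)
      (by positivity) (by positivity) (by ring)]
end

section
/- For all complex numbers A₁, A₂, one has Re[(𝓖(A₁) − 𝓖(A₂))·conj(A₁ − A₂)] ≤ 0. -/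
lemma quinticGL_key (s t X Y : ℝ) (hs : 0 ≤ s) (ht : 0 ≤ t)
    (hXY : X ^ 2 + Y ^ 2 = s * t) :
    (s ^ 2 + t ^ 2) * X + (s ^ 2 - t ^ 2) * Y ≤ s ^ 3 + t ^ 3 := by
  have hM : 0 ≤ s ^ 3 + t ^ 3 := by positivity
  have hC : ((s ^ 2 + t ^ 2) * X + (s ^ 2 - t ^ 2) * Y) ^ 2
      ≤ 2 * (s ^ 4 + t ^ 4) * (X ^ 2 + Y ^ 2) := by
    nlinarith [sq_nonneg ((s ^ 2 + t ^ 2) * Y - (s ^ 2 - t ^ 2) * X)]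
  have hF : 2 * (s * t) * (s ^ 4 + t ^ 4) ≤ (s ^ 3 + t ^ 3) ^ 2 := by
    nlinarith [mul_nonneg (sq_nonneg (s - t))
      (add_nonneg (sq_nonneg (s ^ 2 - t ^ 2)) (sq_nonneg (s * t)))]
  rw [hXY] at hC
  have h1 : ((s ^ 2 + t ^ 2) * X + (s ^ 2 - t ^ 2) * Y) ^ 2 ≤ (s ^ 3 + t ^ 3) ^ 2 := by
    nlinarith [hC, hF]
  nlinarith [h1, hM]

/-- The quintic Ginzburg–Landau nonlinearity `𝓖(A) = (-1+i)|A|⁴A`. -/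
noncomputable def quinticGL (z : ℂ) : ℂ :=
  (-1 + Complex.I) * ((‖z‖ : ℝ) : ℂ)^4 * z

/-- `Re[(𝓖(A₁) - 𝓖(A₂)) ⬝ conj(A₁ - A₂)] ≤ 0`. -/
theorem re_quinticGL_diff_mul_conj_nonpos (A₁ A₂ : ℂ) :
    ((quinticGL A₁ - quinticGL A₂) * (starRingEnd ℂ) (A₁ - A₂)).re ≤ 0 := by
  have e1 : (‖A₁‖ : ℝ) ^ 4 = (A₁.re ^ 2 + A₁.im ^ 2) ^ 2 := by
    rw [show (4 : ℕ) = 2 * 2 from rfl, pow_mul, Complex.sq_norm, Complex.normSq_apply]; ring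
  have e2 : (‖A₂‖ : ℝ) ^ 4 = (A₂.re ^ 2 + A₂.im ^ 2) ^ 2 := by
    rw [show (4 : ℕ) = 2 * 2 from rfl, pow_mul, Complex.sq_norm, Complex.normSq_apply]; ring
  simp only [quinticGL, ← Complex.ofReal_pow, e1, e2]
  set a := A₁.re; set b := A₁.im; set c := A₂.re; set d := A₂.im
  simp only [Complex.mul_re, Complex.sub_re, Complex.sub_im, Complex.mul_im,
    Complex.add_re, Complex.add_im, Complex.neg_re, Complex.neg_im, Complex.one_re,
    Complex.one_im, Complex.I_re, Complex.I_im, Complex.ofReal_re, Complex.ofReal_im,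
    Complex.conj_re, Complex.conj_im]
  have key := quinticGL_key (a ^ 2 + b ^ 2) (c ^ 2 + d ^ 2) (a * c + b * d) (b * c - a * d)
    (by positivity) (by positivity) (by ring)
  nlinarith [key]
end

section
/- Let σ > 0 and let α be a real number with |α| < √(2σ+1)/σ. Then there exists a constant λ_α > 0 such that for every twice continuously differentiable function A : [0,1] → ℂ with A(0) = A(1) = 0, Re ∫₀¹ (−A″(x))·conj((−1+αi)·|A(x)|^{2σ}·A(x)) dx + λ_α ∫₀¹ |A(x)|^{2σ}·|A′(x)|² dx ≤ 0. -/
open Set MeasureTheory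

noncomputable section AuxGL

namespace AuxGL

variable (σ : ℝ) (A A' : ℝ → ℂ)

def Mt (x : ℝ) : ℝ := ‖A x‖ ^ (2*σ)

def Md (x : ℝ) : ℝ :=
  if A x = 0 then 0 else
    σ * (Complex.normSq (A x)) ^ (σ-1) *
      (2*((A x).re*(A' x).re + (A x).im*(A' x).im))

def Hf (x : ℝ) : ℂ :=
  (Md σ A A' x : ℂ) * (starRingEnd ℂ) (A x)
    + (Mt σ A x : ℂ) * (starRingEnd ℂ) (A' x)

lemma Mt_eq (x : ℝ) : Mt σ A x = (Complex.normSq (A x)) ^ σ := by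
  rw [Mt, ← Complex.sq_norm, ← Real.rpow_natCast (‖A x‖) 2,
    ← Real.rpow_mul (norm_nonneg _)]
  norm_num

lemma Mt_nonneg (x : ℝ) : 0 ≤ Mt σ A x := Real.rpow_nonneg (norm_nonneg _) _

lemma Mt_zero {x : ℝ} (hσ : 0 < σ) (h0 : A x = 0) : Mt σ A x = 0 := by
  rw [Mt, h0]
  simp [Real.zero_rpow (by positivity : 2*σ ≠ 0)]

lemma Mt_contWithin (hσ : 0 < σ) {s : Set ℝ} (hA : ContinuousOn A s) :
    ContinuousOn (Mt σ A) s := by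
  apply ContinuousOn.rpow_const (continuous_norm.comp_continuousOn hA)
  exact fun x _ => Or.inr (by positivity)

lemma hasDerivAt_zero {x : ℝ} (hσ : 0 < σ) (hA : HasDerivAt A (A' x) x) (h0 : A x = 0) :
    HasDerivAt (fun y => ((Mt σ A y : ℝ) : ℂ) * (starRingEnd ℂ) (A y)) 0 x := by
  rw [hasDerivAt_iff_tendsto_slope]
  have hs : ∀ y : ℝ, slope (fun y => ((Mt σ A y : ℝ) : ℂ) * (starRingEnd ℂ) (A y)) x y
      = ((Mt σ A y : ℝ) : ℂ) * (starRingEnd ℂ) (slope A x y) := by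
    intro y
    simp only [slope, h0, map_zero, mul_zero, vsub_eq_sub, sub_zero]
    rw [Complex.real_smul, Complex.real_smul, map_mul, Complex.conj_ofReal]
    ring
  have h1 : Filter.Tendsto (fun y => ((Mt σ A y : ℝ) : ℂ)) (nhdsWithin x {x}ᶜ) (nhds 0) := by
    have hc : Filter.Tendsto (fun y => Mt σ A y) (nhds x) (nhds (Mt σ A x)) := by
      have habs : Filter.Tendsto (fun y => ‖A y‖) (nhds x)
          (nhds (‖A x‖)) :=
        (continuous_norm.continuousAt).comp hA.continuousAt
      exact (Real.continuousAt_rpow_const _ _ (Or.inr (by positivity))).comp habs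
    rw [Mt_zero σ A hσ h0] at hc
    have : Filter.Tendsto (fun y => ((Mt σ A y : ℝ) : ℂ)) (nhds x) (nhds ((0:ℝ):ℂ)) :=
      (Complex.continuous_ofReal.tendsto 0).comp hc
    rw [Complex.ofReal_zero] at this
    exact this.mono_left nhdsWithin_le_nhds
  have h2 : Filter.Tendsto (fun y => (starRingEnd ℂ) (slope A x y)) (nhdsWithin x {x}ᶜ)
      (nhds ((starRingEnd ℂ) (A' x))) :=
    (Complex.continuous_conj.continuousAt).tendsto.comp
      (hasDerivAt_iff_tendsto_slope.mp hA)
  have := h1.mul h2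
  rw [zero_mul] at this
  exact this.congr (fun y => (hs y).symm)

lemma hasDerivAt_ne {x : ℝ} (hA : HasDerivAt A (A' x) x) (h0 : A x ≠ 0) :
    HasDerivAt (fun y => ((Mt σ A y : ℝ) : ℂ) * (starRingEnd ℂ) (A y)) (Hf σ A A' x) x := by
  have hre : HasDerivAt (fun y => (A y).re) ((A' x).re) x := by
    exact Complex.reCLM.hasFDerivAt.comp_hasDerivAt x hA
  have him : HasDerivAt (fun y => (A y).im) ((A' x).im) x := by
    exact Complex.imCLM.hasFDerivAt.comp_hasDerivAt x hA
  have hn : HasDerivAt (fun y => Complex.normSq (A y))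
      (2*((A x).re*(A' x).re + (A x).im*(A' x).im)) x := by
    have h := (hre.mul hre).add (him.mul him)
    simp only [Complex.normSq_apply]
    exact h.congr_deriv (by ring)
  have hnne : Complex.normSq (A x) ≠ 0 := by
    simpa [Complex.normSq_eq_zero] using h0
  have hp : HasDerivAt (fun y => (Complex.normSq (A y)) ^ σ) (Md σ A A' x) x := by
    have h := hn.rpow_const (p := σ) (Or.inl hnne)
    rw [Md, if_neg h0]
    convert h using 1
    ring
  have hstar : HasDerivAt (fun y => (starRingEnd ℂ) (A y)) ((starRingEnd ℂ) (A' x)) x := by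
    have h := hA.star
    simpa only [RCLike.star_def] using h
  have h := (hp.ofReal_comp).mul hstar
  simp only [← Mt_eq] at h
  exact h

lemma md_bound (hσ : 0 < σ) (y : ℝ) :
    ‖(Md σ A A' y : ℂ) * (starRingEnd ℂ) (A y)‖
      ≤ 2*σ* Mt σ A y * ‖A' y‖ := by
  by_cases h0 : A y = 0
  · rw [Md, if_pos h0]
    simp only [Complex.ofReal_zero, zero_mul, norm_zero]
    have := Mt_nonneg σ A y
    positivity
  · have hnpos : 0 < Complex.normSq (A y) := Complex.normSq_pos.mpr h0
    have hN : (0:ℝ) ≤ (Complex.normSq (A y)) ^ (σ-1) := Real.rpow_nonneg hnpos.le _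
    have hrel : (Complex.normSq (A y)) ^ (σ-1) * Complex.normSq (A y)
        = (Complex.normSq (A y)) ^ σ := by
      have h := (Real.rpow_add hnpos (σ-1) 1).symm
      rw [Real.rpow_one] at h
      rw [h]
      norm_num
    have hu : |(A y).re*(A' y).re + (A y).im*(A' y).im|
        ≤ ‖A y‖ * ‖A' y‖ := by
      have h1 : (A y).re*(A' y).re + (A y).im*(A' y).im
          = ((starRingEnd ℂ) (A y) * A' y).re := by
        simp [Complex.mul_re]
      rw [h1]
      calc |((starRingEnd ℂ) (A y) * A' y).re| ≤ ‖(starRingEnd ℂ) (A y) * A' y‖ :=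
            Complex.abs_re_le_norm _
        _ = ‖A y‖ * ‖A' y‖ := by
            rw [norm_mul, Complex.norm_conj]
    rw [norm_mul, Complex.norm_real]
    have hconj : ‖(starRingEnd ℂ) (A y)‖ = ‖A y‖ := by
      rw [Complex.norm_conj]
    rw [hconj, Md, if_neg h0]
    have hb : ‖σ * Complex.normSq (A y) ^ (σ - 1) *
        (2 * ((A y).re * (A' y).re + (A y).im * (A' y).im))‖
        ≤ σ * Complex.normSq (A y) ^ (σ - 1) * (2 * (‖A y‖ * ‖A' y‖)) := by
      rw [Real.norm_eq_abs, abs_mul, abs_mul, abs_of_nonneg hσ.le, abs_of_nonneg hN, abs_mul]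
      gcongr
      rw [abs_of_nonneg (by norm_num : (0:ℝ) ≤ 2)]
    calc ‖σ * Complex.normSq (A y) ^ (σ - 1) *
          (2 * ((A y).re * (A' y).re + (A y).im * (A' y).im))‖ * ‖A y‖
        ≤ σ * Complex.normSq (A y) ^ (σ - 1) * (2 * (‖A y‖ * ‖A' y‖))
            * ‖A y‖ := by
          gcongr
      _ = 2*σ* ((Complex.normSq (A y)) ^ (σ-1) * Complex.normSq (A y)) * ‖A' y‖ := by
          rw [← Complex.sq_norm]
          ring
      _ = 2*σ* Mt σ A y * ‖A' y‖ := by rw [hrel, ← Mt_eq]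

lemma contOn (hσ : 0 < σ) {s : Set ℝ} (hA : ∀ x ∈ s, HasDerivAt A (A' x) x)
    (hA' : ContinuousOn A' s) : ContinuousOn (Hf σ A A') s := by
  have hAc : ContinuousOn A s := fun x hx => ((hA x hx).continuousAt).continuousWithinAt
  have hMt : ContinuousOn (Mt σ A) s := Mt_contWithin σ A hσ hAc
  have h2 : ContinuousOn (fun x => (Mt σ A x : ℂ) * (starRingEnd ℂ) (A' x)) s :=
    (Complex.continuous_ofReal.comp_continuousOn hMt).mul
      (Complex.continuous_conj.comp_continuousOn hA')
  have h1 : ContinuousOn (fun x => (Md σ A A' x : ℂ) * (starRingEnd ℂ) (A x)) s := by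
    intro x hx
    by_cases h0 : A x = 0
    · have hg : Filter.Tendsto (fun y => 2*σ* Mt σ A y * ‖A' y‖)
          (nhdsWithin x s) (nhds 0) := by
        have hgc : ContinuousWithinAt (fun y => 2*σ* Mt σ A y * ‖A' y‖) s x :=
          ((continuousWithinAt_const.mul (hMt x hx)).mul
            ((continuous_norm.comp_continuousOn hA') x hx))
        have : (2*σ* Mt σ A x * ‖A' x‖) = 0 := by
          rw [Mt_zero σ A hσ h0]; ring
        rw [ContinuousWithinAt, this] at hgc
        exact hgc
      have htend : Filter.Tendsto (fun y => (Md σ A A' y : ℂ) * (starRingEnd ℂ) (A y))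
          (nhdsWithin x s) (nhds 0) :=
        squeeze_zero_norm (fun y => md_bound σ A A' hσ y) hg
      have hfx : (Md σ A A' x : ℂ) * (starRingEnd ℂ) (A x) = 0 := by
        rw [h0]; simp
      rw [ContinuousWithinAt, hfx]
      exact htend
    · have hev : ∀ᶠ y in nhds x, A y ≠ 0 := (hA x hx).continuousAt.eventually_ne h0
      have hev' : (fun y => (Md σ A A' y : ℂ) * (starRingEnd ℂ) (A y)) =ᶠ[nhdsWithin x s]
          (fun y => ((σ * (Complex.normSq (A y)) ^ (σ-1) *
            (2*((A y).re*(A' y).re + (A y).im*(A' y).im)) : ℝ) : ℂ) * (starRingEnd ℂ) (A y)) := by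
        filter_upwards [nhdsWithin_le_nhds hev] with y hy
        rw [Md, if_neg hy]
      have hform : ContinuousWithinAt
          (fun y => ((σ * (Complex.normSq (A y)) ^ (σ-1) *
            (2*((A y).re*(A' y).re + (A y).im*(A' y).im)) : ℝ) : ℂ) * (starRingEnd ℂ) (A y))
          s x := by
        have hnsq : ContinuousWithinAt (fun y => Complex.normSq (A y)) s x :=
          (Complex.continuous_normSq.comp_continuousOn hAc) x hx
        have hnne : Complex.normSq (A x) ≠ 0 := by simpa [Complex.normSq_eq_zero] using h0
        have hrp : ContinuousWithinAt (fun y => (Complex.normSq (A y)) ^ (σ-1)) s x :=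
          hnsq.rpow_const (Or.inl hnne)
        have hreA : ContinuousWithinAt (fun y => (A y).re) s x :=
          (Complex.continuous_re.comp_continuousOn hAc) x hx
        have himA : ContinuousWithinAt (fun y => (A y).im) s x :=
          (Complex.continuous_im.comp_continuousOn hAc) x hx
        have hreA' : ContinuousWithinAt (fun y => (A' y).re) s x :=
          (Complex.continuous_re.comp_continuousOn hA') x hx
        have himA' : ContinuousWithinAt (fun y => (A' y).im) s x :=
          (Complex.continuous_im.comp_continuousOn hA') x hx
        exact ((Complex.continuous_ofReal.continuousAt.comp_continuousWithinAt
          ((continuousWithinAt_const.mul hrp).mul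
            (continuousWithinAt_const.mul ((hreA.mul hreA').add (himA.mul himA'))))).mul
          ((Complex.continuous_conj.comp_continuousOn hAc) x hx))
      exact hform.congr_of_eventuallyEq hev' (by rw [Md, if_neg h0])
  exact h1.add h2

lemma quad (σ α u v : ℝ) (hσ : 0 < σ) (hαle : α^2*σ^2 ≤ 2*σ+1) :
    0 ≤ (1+2*σ - ((1+2*σ)-α^2*σ^2)/(2+2*σ))*u^2 - 2*α*σ*u*v
      + (1 - ((1+2*σ)-α^2*σ^2)/(2+2*σ))*v^2 := by
  set lam := ((1+2*σ)-α^2*σ^2)/(2+2*σ) with hl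
  have h2 : (0:ℝ) < 2+2*σ := by linarith
  have key : (1+2*σ-lam)*(1-lam) - α^2*σ^2 = lam^2 := by
    rw [hl]; field_simp; ring
  have hlle : lam ≤ (1+2*σ)/(2+2*σ) := by
    rw [hl]
    exact (div_le_div_iff_of_pos_right h2).mpr (by nlinarith [sq_nonneg (α*σ)])
  have ha : 0 < 1+2*σ-lam := by
    have : (1+2*σ)/(2+2*σ) < 1+2*σ := by
      rw [div_lt_iff₀ h2]; nlinarith
    linarith
  nlinarith [sq_nonneg ((1+2*σ-lam)*u - α*σ*v), sq_nonneg (lam*v), key, ha,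
    mul_pos ha ha, sq_nonneg u, sq_nonneg v]

lemma pointwise (σ α : ℝ) (hσ : 0 < σ) (hαle : α^2*σ^2 ≤ 2*σ+1) (A A' : ℝ → ℂ) (x : ℝ) :
    ((starRingEnd ℂ) (-1 + (α:ℂ)*Complex.I) * Hf σ A A' x * A' x).re
      + (((1+2*σ)-α^2*σ^2)/(2+2*σ)) * (Mt σ A x * ‖A' x‖ ^ 2) ≤ 0 := by
  by_cases h0 : A x = 0
  · rw [Mt_zero σ A hσ h0]
    have hH : Hf σ A A' x = 0 := by
      rw [Hf, Mt_zero σ A hσ h0, h0]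
      simp [Md, h0]
    rw [hH]
    simp
  · have hnpos : 0 < Complex.normSq (A x) := Complex.normSq_pos.mpr h0
    set z := A x with hz
    set w := A' x with hw
    set u := z.re*w.re + z.im*w.im with hu
    set v := z.re*w.im - z.im*w.re with hv
    have hN : (0:ℝ) ≤ (Complex.normSq z) ^ (σ-1) := Real.rpow_nonneg hnpos.le _
    have hQ : (Complex.normSq z) ^ σ = (Complex.normSq z) ^ (σ-1) * Complex.normSq z := by
      have h := (Real.rpow_add hnpos (σ-1) 1).symm
      rw [Real.rpow_one] at h
      rw [h]; norm_num
    have hquad := quad σ α u v hσ hαle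
    have hprod := mul_nonneg hN hquad
    have hMd : Md σ A A' x = σ * (Complex.normSq z) ^ (σ-1) * (2*u) := by
      rw [Md, if_neg h0]
    have habs2 : ‖w‖ ^ 2 = w.re^2 + w.im^2 := by
      rw [Complex.sq_norm, Complex.normSq_apply]; ring
    have hnsq : Complex.normSq z = z.re^2 + z.im^2 := by
      rw [Complex.normSq_apply]; ring
    rw [Hf, hMd, Mt_eq, hQ, habs2, ← hz, ← hw]
    simp only [Complex.mul_re, Complex.mul_im, Complex.add_re, Complex.add_im,
      Complex.ofReal_re, Complex.ofReal_im, Complex.conj_re, Complex.conj_im,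
      Complex.neg_re, Complex.neg_im, Complex.one_re, Complex.one_im,
      Complex.I_re, Complex.I_im, Complex.ofReal_mul]
    rw [hnsq] at hprod ⊢
    nlinarith [hprod, sq_nonneg (z.re*w.re + z.im*w.im)]

end AuxGL

open AuxGL in
/-- If `σ > 0` and `|α| < √(2σ+1)/σ`, there is `λ_α > 0` so that for every `C²`
function `A : [0,1] → ℂ` vanishing at the endpoints,
`Re ∫₀¹ (-A'') conj((-1+αi)|A|^{2σ}A) + λ_α ∫₀¹ |A|^{2σ}|A'|² ≤ 0`. -/
theorem exists_lam_re_integral_add_le_zero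
    (σ α : ℝ) (hσ : 0 < σ) (hα : |α| < Real.sqrt (2*σ + 1) / σ) :
    ∃ lam : ℝ, 0 < lam ∧
      ∀ (A A' A'' : ℝ → ℂ),
        (∀ x ∈ Icc (0:ℝ) 1, HasDerivAt A (A' x) x) →
        (∀ x ∈ Icc (0:ℝ) 1, HasDerivAt A' (A'' x) x) →
        ContinuousOn A'' (Icc (0:ℝ) 1) →
        A 0 = 0 → A 1 = 0 →
        (∫ x in (0:ℝ)..1, (-(A'' x)) * (starRingEnd ℂ)
            ((-1 + (α : ℂ) * Complex.I) *
              ((‖A x‖ ^ (2*σ) : ℝ) : ℂ) * A x)).re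
          + lam * ∫ x in (0:ℝ)..1,
              ‖A x‖ ^ (2*σ) * ‖A' x‖^2 ≤ 0 := by
  have hαs' : α^2*σ^2 < 2*σ+1 := by
    have h1 : |α| * σ < Real.sqrt (2*σ+1) := (lt_div_iff₀ hσ).mp hα
    have h2 : (|α| * σ)^2 < (Real.sqrt (2*σ+1))^2 := by
      apply pow_lt_pow_left₀ h1 (by positivity) (by norm_num)
    have h3 : (Real.sqrt (2*σ+1))^2 = 2*σ+1 := Real.sq_sqrt (by linarith)
    nlinarith [sq_abs α]
  have hαs : α^2*σ^2 ≤ 2*σ+1 := hαs'.le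
  refine ⟨((1+2*σ) - α^2*σ^2)/(2+2*σ), div_pos (by linarith) (by linarith), ?_⟩
  set lam := ((1+2*σ) - α^2*σ^2)/(2+2*σ) with hlamdef
  intro A A' A'' hA hA' hA''c hz0 hz1
  have huIcc : uIcc (0:ℝ) 1 = Icc 0 1 := uIcc_of_le zero_le_one
  have hA'cont : ContinuousOn A' (Icc (0:ℝ) 1) :=
    fun x hx => (hA' x hx).continuousAt.continuousWithinAt
  have hAcont : ContinuousOn A (Icc (0:ℝ) 1) :=
    fun x hx => (hA x hx).continuousAt.continuousWithinAt
  have hHf : ContinuousOn (Hf σ A A') (Icc (0:ℝ) 1) := contOn σ A A' hσ hA hA'cont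
  set cc := (starRingEnd ℂ) (-1 + (α:ℂ)*Complex.I) with hcc
  set f : ℝ → ℂ := fun x => cc * ((Mt σ A x : ℂ) * (starRingEnd ℂ) (A x)) with hf
  set g : ℝ → ℂ := fun x => cc * Hf σ A A' x with hg
  have hderiv : ∀ x ∈ uIcc (0:ℝ) 1, HasDerivAt f (g x) x := by
    intro x hx
    rw [huIcc] at hx
    rcases eq_or_ne (A x) 0 with h|h
    · have hd := (hasDerivAt_zero σ A A' hσ (hA x hx) h).const_mul cc
      have hH0 : Hf σ A A' x = 0 := by
        rw [Hf, Mt_zero σ A hσ h, h]; simp [Md, h]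
      rw [hg]
      simp only [hH0, mul_zero]
      simpa using hd
    · exact (hasDerivAt_ne σ A A' (hA x hx) h).const_mul cc
  have hgint : IntervalIntegrable g MeasureTheory.volume 0 1 := by
    apply ContinuousOn.intervalIntegrable
    rw [huIcc]
    exact continuousOn_const.mul hHf
  have hA''int : IntervalIntegrable A'' MeasureTheory.volume 0 1 := by
    apply ContinuousOn.intervalIntegrable
    rw [huIcc]; exact hA''c
  have hIBP := intervalIntegral.integral_mul_deriv_eq_deriv_mul hderiv
    (fun x hx => hA' x (huIcc ▸ hx)) hgint hA''int
  have hf1 : f 1 = 0 := by rw [hf]; simp [hz1]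
  have hf0 : f 0 = 0 := by rw [hf]; simp [hz0]
  rw [hf1, hf0] at hIBP
  have hfirst : (∫ x in (0:ℝ)..1, (-(A'' x)) * (starRingEnd ℂ)
      ((-1 + (α : ℂ) * Complex.I) * ((‖A x‖ ^ (2*σ) : ℝ) : ℂ) * A x))
      = ∫ x in (0:ℝ)..1, g x * A' x := by
    have hpt : ∀ x : ℝ, (-(A'' x)) * (starRingEnd ℂ)
        ((-1 + (α : ℂ) * Complex.I) * ((‖A x‖ ^ (2*σ) : ℝ) : ℂ) * A x)
        = -(f x * A'' x) := by
      intro x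
      rw [hf, hcc]
      simp only [map_mul, Complex.conj_ofReal, Mt]
      ring
    rw [intervalIntegral.integral_congr (fun x _ => hpt x), intervalIntegral.integral_neg,
      hIBP]
    simp
  rw [hfirst]
  have hgA'cont : ContinuousOn (fun x => g x * A' x) (Icc (0:ℝ) 1) :=
    (continuousOn_const.mul hHf).mul hA'cont
  have hgA'int : IntervalIntegrable (fun x => g x * A' x) MeasureTheory.volume 0 1 := by
    apply ContinuousOn.intervalIntegrable; rw [huIcc]; exact hgA'cont
  have hre : (∫ x in (0:ℝ)..1, g x * A' x).re = ∫ x in (0:ℝ)..1, (g x * A' x).re := by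
    have h := Complex.reCLM.intervalIntegral_comp_comm hgA'int
    simpa using h.symm
  rw [hre]
  have hsecond : lam * ∫ x in (0:ℝ)..1, ‖A x‖ ^ (2*σ) * ‖A' x‖^2
      = ∫ x in (0:ℝ)..1, lam * (Mt σ A x * ‖A' x‖^2) := by
    rw [← intervalIntegral.integral_const_mul]
    rfl
  rw [hsecond]
  have hint1 : IntervalIntegrable (fun x => (g x * A' x).re) MeasureTheory.volume 0 1 := by
    apply ContinuousOn.intervalIntegrable; rw [huIcc]
    exact Complex.continuous_re.comp_continuousOn hgA'cont
  have hint2 : IntervalIntegrable (fun x => lam * (Mt σ A x * ‖A' x‖^2))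
      MeasureTheory.volume 0 1 := by
    apply ContinuousOn.intervalIntegrable; rw [huIcc]
    exact continuousOn_const.mul ((Mt_contWithin σ A hσ hAcont).mul
      ((continuous_norm.comp_continuousOn hA'cont).pow 2))
  rw [← intervalIntegral.integral_add hint1 hint2]
  have hptle : ∀ x ∈ Icc (0:ℝ) 1,
      (g x * A' x).re + lam * (Mt σ A x * ‖A' x‖^2) ≤ 0 := by
    intro x _
    have := pointwise σ α hσ hαs A A' x
    rw [hg, hcc, hlamdef]
    exact this
  have hneg := intervalIntegral.integral_nonneg (μ := MeasureTheory.volume) (f := fun x =>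
      -((g x * A' x).re + lam * (Mt σ A x * ‖A' x‖^2)))
    (by norm_num : (0:ℝ) ≤ 1) (fun u hu => by simpa using neg_nonneg.mpr (hptle u hu))
  rw [intervalIntegral.integral_neg] at hneg
  linarith
end AuxGL
end

section
/- Let σ > 0 and let α be a real number with |α| < √(2σ+1)/σ. Then for every twice continuously differentiable function A : [0,1] → ℂ with A(0) = A(1) = 0, Re ∫₀¹ (−A″(x))·conj((−1+αi)·|A(x)|^{2σ}·A(x)) dx ≤ 0. -/
open Set MeasureTheory

section Aux
open Set Complex
-- scalar rpow helper
lemma rpow_sub_one_mul {t σ : ℝ} (ht : 0 ≤ t) (hσ : σ ≠ 0) : t ^ (σ - 1) * t = t ^ σ := by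
  rcases eq_or_lt_of_le ht with h | h
  · simp [← h, Real.zero_rpow hσ]
  · rw [show σ = (σ-1)+1 by ring, Real.rpow_add h, Real.rpow_one]
    ring_nf

-- derivative of normSq ∘ A
lemma hasDerivAt_normSq_comp {A A' : ℝ → ℂ} {x : ℝ} (h : HasDerivAt A (A' x) x) :
    HasDerivAt (fun y => Complex.normSq (A y))
      (2 * ((starRingEnd ℂ) (A x) * A' x).re) x := by
  have hre : HasDerivAt (fun y => (A y).re) ((A' x).re) x :=
    Complex.reCLM.hasFDerivAt.comp_hasDerivAt x h
  have him : HasDerivAt (fun y => (A y).im) ((A' x).im) x :=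
    Complex.imCLM.hasFDerivAt.comp_hasDerivAt x h
  have := (hre.mul hre).add (him.mul him)
  simp only [Complex.normSq_apply]
  refine this.congr_deriv ?_
  simp [Complex.mul_re, Complex.conj_re, Complex.conj_im]
  ring

-- derivative of x ↦ (normSq (A x))^σ * A x
lemma hasDerivAt_F {σ : ℝ} (hσ : 0 < σ) {A A' : ℝ → ℂ} {x : ℝ}
    (h : HasDerivAt A (A' x) x) :
    HasDerivAt (fun y => ((Complex.normSq (A y) ^ σ : ℝ) : ℂ) * A y)
      (((σ * Complex.normSq (A x) ^ (σ - 1) *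
          (2 * ((starRingEnd ℂ) (A x) * A' x).re) : ℝ) : ℂ) * A x
        + ((Complex.normSq (A x) ^ σ : ℝ) : ℂ) * A' x) x := by
  by_cases ha : A x = 0
  · -- derivative is 0 at zeros of A
    have hD0 : (((σ * Complex.normSq (A x) ^ (σ - 1) *
          (2 * ((starRingEnd ℂ) (A x) * A' x).re) : ℝ) : ℂ) * A x
        + ((Complex.normSq (A x) ^ σ : ℝ) : ℂ) * A' x) = 0 := by
      simp [ha, Real.zero_rpow hσ.ne']
    rw [hD0]
    rw [hasDerivAt_iff_tendsto_slope]
    have hslope : slope (fun y => ((Complex.normSq (A y) ^ σ : ℝ) : ℂ) * A y) x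
        = fun y => ((Complex.normSq (A y) ^ σ : ℝ) : ℂ) * slope A x y := by
      funext y
      simp only [slope_def_module, ha, Complex.normSq_zero, Real.zero_rpow hσ.ne',
        Complex.ofReal_zero, zero_mul, sub_zero, mul_smul_comm]
    rw [hslope]
    have t1 : Filter.Tendsto (fun y => ((Complex.normSq (A y) ^ σ : ℝ) : ℂ))
        (nhdsWithin x {x}ᶜ) (nhds 0) := by
      have hc : ContinuousAt (fun y => ((Complex.normSq (A y) ^ σ : ℝ) : ℂ)) x := by
        apply Complex.continuous_ofReal.continuousAt.comp
        exact (Real.continuousAt_rpow_const _ _ (Or.inr hσ.le)).comp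
          (Complex.continuous_normSq.continuousAt.comp h.continuousAt)
      have := hc.continuousWithinAt (s := {x}ᶜ)
      simpa [ContinuousWithinAt, ha, Real.zero_rpow hσ.ne'] using this
    have t2 : Filter.Tendsto (slope A x) (nhdsWithin x {x}ᶜ) (nhds (A' x)) :=
      hasDerivAt_iff_tendsto_slope.mp h
    simpa using t1.mul t2
  · have hn : Complex.normSq (A x) ≠ 0 := by simpa [Complex.normSq_eq_zero] using ha
    have h1 : HasDerivAt (fun y => Complex.normSq (A y) ^ σ)
        (σ * Complex.normSq (A x) ^ (σ - 1) *
          (2 * ((starRingEnd ℂ) (A x) * A' x).re)) x := by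
      have := (Real.hasDerivAt_rpow_const (x := Complex.normSq (A x)) (p := σ)
        (Or.inl hn)).comp x (hasDerivAt_normSq_comp h)
      exact this
    exact (h1.ofReal_comp.mul h)

-- continuity of the derivative D on Icc
lemma continuousOn_D {σ : ℝ} (hσ : 0 < σ) {A A' : ℝ → ℂ}
    (cA : ContinuousOn A (Icc (0:ℝ) 1)) (cA' : ContinuousOn A' (Icc (0:ℝ) 1)) :
    ContinuousOn (fun x => ((σ * Complex.normSq (A x) ^ (σ - 1) *
          (2 * ((starRingEnd ℂ) (A x) * A' x).re) : ℝ) : ℂ) * A x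
        + ((Complex.normSq (A x) ^ σ : ℝ) : ℂ) * A' x) (Icc (0:ℝ) 1) := by
  have cn : ContinuousOn (fun x => Complex.normSq (A x)) (Icc (0:ℝ) 1) :=
    Complex.continuous_normSq.comp_continuousOn cA
  have cnσ : ContinuousOn (fun x => Complex.normSq (A x) ^ σ) (Icc (0:ℝ) 1) :=
    fun x hx => (cn x hx).rpow_const (Or.inr hσ.le)
  refine ContinuousOn.add ?_ ((Complex.continuous_ofReal.comp_continuousOn cnσ).mul cA')
  -- the first term, with the possibly-singular factor normSq^(σ-1)
  intro x₀ hx₀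
  by_cases ha : A x₀ = 0
  · -- squeeze to zero
    have hval : ((σ * Complex.normSq (A x₀) ^ (σ - 1) *
          (2 * ((starRingEnd ℂ) (A x₀) * A' x₀).re) : ℝ) : ℂ) * A x₀ = 0 := by
      simp [ha]
    rw [ContinuousWithinAt, hval]
    apply squeeze_zero_norm (a := fun y => 2 * σ * Complex.normSq (A y) ^ σ * ‖A' y‖)
    · intro y
      have hb : |2 * ((starRingEnd ℂ) (A y) * A' y).re| ≤ 2 * (‖A y‖ * ‖A' y‖) := by
        have h1 := Complex.abs_re_le_norm ((starRingEnd ℂ) (A y) * A' y)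
        have h2 : ‖(starRingEnd ℂ) (A y) * A' y‖ = ‖A y‖ * ‖A' y‖ := by
          simp
        rw [abs_mul, show |(2:ℝ)| = 2 by norm_num]
        nlinarith
      have hnm : Complex.normSq (A y) = ‖A y‖ * ‖A y‖ := by
        rw [Complex.normSq_eq_norm_sq, sq]
      have hm : (0:ℝ) ≤ Complex.normSq (A y) ^ (σ - 1) :=
        Real.rpow_nonneg (Complex.normSq_nonneg _) _
      have key : Complex.normSq (A y) ^ (σ - 1) * (‖A y‖ * ‖A y‖)
          = Complex.normSq (A y) ^ σ := by
        rw [← hnm]; exact rpow_sub_one_mul (Complex.normSq_nonneg _) hσ.ne'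
      calc ‖((σ * Complex.normSq (A y) ^ (σ - 1) *
            (2 * ((starRingEnd ℂ) (A y) * A' y).re) : ℝ) : ℂ) * A y‖
          = |σ| * Complex.normSq (A y) ^ (σ - 1)
            * |2 * ((starRingEnd ℂ) (A y) * A' y).re| * ‖A y‖ := by
            rw [norm_mul, Complex.norm_real, Real.norm_eq_abs, abs_mul, abs_mul, _root_.abs_of_nonneg hm]
        _ ≤ 2 * σ * Complex.normSq (A y) ^ σ * ‖A' y‖ := by
            rw [abs_of_pos hσ, ← key]
            have hAy : (0:ℝ) ≤ ‖A y‖ := norm_nonneg _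
            have hA'y : (0:ℝ) ≤ ‖A' y‖ := norm_nonneg _
            have h3 := mul_le_mul_of_nonneg_left hb
              (mul_nonneg (mul_nonneg hσ.le hm) (norm_nonneg (A y)))
            nlinarith [h3]
    · have : ContinuousWithinAt (fun y => 2 * σ * Complex.normSq (A y) ^ σ * ‖A' y‖)
          (Icc (0:ℝ) 1) x₀ :=
        (((continuousWithinAt_const).mul (cnσ x₀ hx₀)).mul (cA' x₀ hx₀).norm)
      simpa [ContinuousWithinAt, ha, Real.zero_rpow hσ.ne'] using this
  · -- A x₀ ≠ 0 : everything is continuous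
    have hn : Complex.normSq (A x₀) ≠ 0 := by simpa [Complex.normSq_eq_zero] using ha
    have c1 : ContinuousWithinAt (fun y => Complex.normSq (A y) ^ (σ - 1))
        (Icc (0:ℝ) 1) x₀ :=
      (cn x₀ hx₀).rpow_const (Or.inl hn)
    have cρ : ContinuousWithinAt
        (fun y => 2 * ((starRingEnd ℂ) (A y) * A' y).re) (Icc (0:ℝ) 1) x₀ := by
      apply ContinuousWithinAt.mul continuousWithinAt_const
      exact (Complex.continuous_re.continuousAt.comp_continuousWithinAt
        (((continuous_star.continuousAt.comp_continuousWithinAt (cA x₀ hx₀))).mul (cA' x₀ hx₀)))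
    exact (Complex.continuous_ofReal.continuousAt.comp_continuousWithinAt
      ((continuousWithinAt_const.mul c1).mul cρ)).mul (cA x₀ hx₀)

lemma complex_id (t s α : ℝ) (a b : ℂ) :
    (b * (starRingEnd ℂ) ((-1 + (α:ℂ) * Complex.I) * (((t:ℝ):ℂ) * a + ((s:ℝ):ℂ) * b))).re
      = -(t * ((starRingEnd ℂ) a * b).re) - s * Complex.normSq b
        + α * (t * ((starRingEnd ℂ) a * b).im) := by
  simp only [Complex.mul_re, Complex.mul_im, Complex.add_re, Complex.add_im,
    Complex.ofReal_re, Complex.ofReal_im, Complex.I_re, Complex.I_im,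
    Complex.conj_re, Complex.conj_im, Complex.neg_re, Complex.neg_im,
    Complex.one_re, Complex.one_im, Complex.normSq_apply, map_add, map_mul]
  ring

lemma pointwise_ineq {σ α : ℝ} (hσ : 0 < σ) (hα2 : α^2 * σ^2 ≤ 2*σ + 1) (a b : ℂ) :
    (b * (starRingEnd ℂ) ((-1 + (α:ℂ) * Complex.I) *
      (((σ * Complex.normSq a ^ (σ - 1) * (2 * ((starRingEnd ℂ) a * b).re) : ℝ):ℂ) * a
        + ((Complex.normSq a ^ σ : ℝ):ℂ) * b))).re ≤ 0 := by
  by_cases ha : a = 0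
  · simp [ha, Real.zero_rpow hσ.ne']
  · have hnpos : 0 < Complex.normSq a := Complex.normSq_pos.mpr ha
    have hmpos : 0 < Complex.normSq a ^ (σ - 1) := Real.rpow_pos_of_pos hnpos _
    have hns : Complex.normSq a ^ σ = Complex.normSq a ^ (σ - 1) * Complex.normSq a :=
      (rpow_sub_one_mul hnpos.le hσ.ne').symm
    rw [hns, complex_id (σ * Complex.normSq a ^ (σ - 1) * (2 * ((starRingEnd ℂ) a * b).re))
      (Complex.normSq a ^ (σ - 1) * Complex.normSq a) α a b]
    set m := Complex.normSq a ^ (σ - 1)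
    set n := Complex.normSq a
    set p := ((starRingEnd ℂ) a * b).re
    set q := ((starRingEnd ℂ) a * b).im
    have hpq : p^2 + q^2 = n * Complex.normSq b := by
      have h := Complex.normSq_mul ((starRingEnd ℂ) a) b
      rw [Complex.normSq_conj] at h
      rw [← h, Complex.normSq_apply]; ring
    nlinarith [mul_nonneg hmpos.le (sq_nonneg (α*σ*p - q)),
      mul_nonneg (mul_nonneg hmpos.le (sub_nonneg.mpr hα2)) (sq_nonneg p)]

end Aux

/-- If `σ > 0` and `|α| < √(2σ+1)/σ`, then for every `C²` function
`A : [0,1] → ℂ` vanishing at the endpoints,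
`Re ∫₀¹ (-A'') conj((-1+αi)|A|^{2σ}A) ≤ 0`. -/
theorem re_integral_neg_second_deriv_mul_conj_nonpos
    (σ α : ℝ) (hσ : 0 < σ) (hα : |α| < Real.sqrt (2*σ + 1) / σ)
    (A A' A'' : ℝ → ℂ)
    (hA : ∀ x ∈ Icc (0:ℝ) 1, HasDerivAt A (A' x) x)
    (hA' : ∀ x ∈ Icc (0:ℝ) 1, HasDerivAt A' (A'' x) x)
    (hA'' : ContinuousOn A'' (Icc (0:ℝ) 1))
    (h0 : A 0 = 0) (h1 : A 1 = 0) :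
    (∫ x in (0:ℝ)..1, (-(A'' x)) * (starRingEnd ℂ)
        ((-1 + (α : ℂ) * Complex.I) *
          ((‖A x‖ ^ (2*σ) : ℝ) : ℂ) * A x)).re ≤ 0 := by
  have hsqrt : |α| * σ < Real.sqrt (2*σ + 1) := (lt_div_iff₀ hσ).mp hα
  have hα2 : α^2 * σ^2 ≤ 2*σ + 1 := by
    have hn : 0 ≤ |α| * σ := mul_nonneg (abs_nonneg α) hσ.le
    have e1 : |α| * σ * (|α| * σ) = α^2 * σ^2 := by rw [show α^2 = |α|^2 from (sq_abs α).symm]; ring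
    have e2 : Real.sqrt (2*σ+1) * Real.sqrt (2*σ+1) = 2*σ+1 :=
      Real.mul_self_sqrt (by linarith)
    have h3 := mul_self_lt_mul_self hn hsqrt
    rw [e1, e2] at h3
    linarith
  have habs : ∀ z : ℂ, (‖z‖ ^ (2*σ) : ℝ) = Complex.normSq z ^ σ := by
    intro z
    rw [Real.rpow_mul (norm_nonneg z) 2 σ]
    congr 1
    rw [show (2:ℝ) = ((2:ℕ):ℝ) by norm_num, Real.rpow_natCast, Complex.sq_norm]
  have hIcc : uIcc (0:ℝ) 1 = Icc (0:ℝ) 1 := uIcc_of_le zero_le_one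
  have cA : ContinuousOn A (Icc (0:ℝ) 1) := fun x hx => (hA x hx).continuousAt.continuousWithinAt
  have cA' : ContinuousOn A' (Icc (0:ℝ) 1) := fun x hx => (hA' x hx).continuousAt.continuousWithinAt
  set c : ℂ := -1 + (α:ℂ) * Complex.I with hc
  set D : ℝ → ℂ := fun x => ((σ * Complex.normSq (A x) ^ (σ - 1) *
      (2 * ((starRingEnd ℂ) (A x) * A' x).re) : ℝ) : ℂ) * A x
      + ((Complex.normSq (A x) ^ σ : ℝ) : ℂ) * A' x with hD
  set v : ℝ → ℂ := fun x => (starRingEnd ℂ) (c * (((Complex.normSq (A x) ^ σ : ℝ) : ℂ) * A x))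
    with hv
  set w : ℝ → ℂ := fun x => (starRingEnd ℂ) (c * D x) with hw
  have hvderiv : ∀ x ∈ uIcc (0:ℝ) 1, HasDerivAt v (w x) x := by
    intro x hx
    rw [hIcc] at hx
    have := ((hasDerivAt_F hσ (hA x hx)).const_mul c).star
    exact this
  have cD : ContinuousOn D (Icc (0:ℝ) 1) := continuousOn_D hσ cA cA'
  have cw : ContinuousOn w (Icc (0:ℝ) 1) :=
    continuous_star.comp_continuousOn (continuousOn_const.mul cD)
  have cnσ : ContinuousOn (fun x => Complex.normSq (A x) ^ σ) (Icc (0:ℝ) 1) :=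
    fun x hx => ((Complex.continuous_normSq.comp_continuousOn cA) x hx).rpow_const (Or.inr hσ.le)
  have cv : ContinuousOn v (Icc (0:ℝ) 1) :=
    continuous_star.comp_continuousOn (continuousOn_const.mul
      ((Complex.continuous_ofReal.comp_continuousOn cnσ).mul cA))
  have int1 : IntervalIntegrable (fun x => A'' x * v x) volume 0 1 :=
    ContinuousOn.intervalIntegrable (by rw [hIcc]; exact hA''.mul cv)
  have int2 : IntervalIntegrable (fun x => A' x * w x) volume 0 1 :=
    ContinuousOn.intervalIntegrable (by rw [hIcc]; exact cA'.mul cw)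
  have hibp := intervalIntegral.integral_deriv_mul_eq_sub (a := 0) (b := 1)
      (u := A') (v := v) (u' := A'') (v' := w)
      (fun x hx => hA' x (hIcc ▸ hx)) hvderiv
      (ContinuousOn.intervalIntegrable (by rw [hIcc]; exact hA''))
      (ContinuousOn.intervalIntegrable (by rw [hIcc]; exact cw))
  have hv0 : v 0 = 0 := by simp [hv, h0]
  have hv1 : v 1 = 0 := by simp [hv, h1]
  rw [hv0, hv1, intervalIntegral.integral_add int1 int2] at hibp
  simp only [mul_zero, sub_zero] at hibp
  -- hibp : ∫ A''*v + ∫ A'*w = 0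
  have heq : (fun x => (-(A'' x)) * (starRingEnd ℂ)
        ((-1 + (α : ℂ) * Complex.I) * ((‖A x‖ ^ (2*σ) : ℝ) : ℂ) * A x))
      = fun x => -(A'' x * v x) := by
    funext x
    rw [habs (A x)]
    simp only [hv, ← hc, mul_assoc, neg_mul]
  rw [heq, intervalIntegral.integral_neg]
  have hre : (∫ x in (0:ℝ)..1, A' x * w x).re
      = ∫ x in (0:ℝ)..1, (A' x * w x).re := by
    have := Complex.reCLM.intervalIntegral_comp_comm int2
    simpa using this.symm
  have hfinal : (∫ x in (0:ℝ)..1, A' x * w x).re ≤ 0 := by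
    rw [hre]
    have hnn := intervalIntegral.integral_nonneg (μ := volume) (a := 0) (b := 1)
      (f := fun x => -((A' x * w x).re)) zero_le_one
      (fun u hu => by
        rw [neg_nonneg]
        exact pointwise_ineq hσ hα2 (A u) (A' u))
    rw [intervalIntegral.integral_neg] at hnn
    linarith
  have : (∫ x in (0:ℝ)..1, A'' x * v x) = -(∫ x in (0:ℝ)..1, A' x * w x) := by
    linear_combination hibp
  rw [this, neg_neg]
  exact hfinal
end

section
/- For every twice continuously differentiable function A : [0,1] → ℂ with A(0) = A(1) = 0, Re ∫₀¹ (−A″(x))·conj(𝓕(A(x)) + 𝓖(A(x))) dx ≤ 0. -/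
open Set MeasureTheory

lemma ptwise (a b : ℂ) :
    ((-1 - Complex.I) *
      (((starRingEnd ℂ) b * (starRingEnd ℂ) a + (starRingEnd ℂ) a * (starRingEnd ℂ) b) * a
          + (starRingEnd ℂ) a * (starRingEnd ℂ) a * b
        + ((((starRingEnd ℂ) b * (starRingEnd ℂ) a + (starRingEnd ℂ) a * (starRingEnd ℂ) b)
              * (starRingEnd ℂ) a
            + (starRingEnd ℂ) a * (starRingEnd ℂ) a * (starRingEnd ℂ) b) * (a * a)
          + (starRingEnd ℂ) a * (starRingEnd ℂ) a * (starRingEnd ℂ) a * (b * a + a * b))) * b).re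
      ≤ 0 := by
  obtain ⟨a1, a2⟩ := a
  obtain ⟨b1, b2⟩ := b
  simp only [Complex.mul_re, Complex.mul_im, Complex.add_re, Complex.add_im, Complex.sub_re,
    Complex.sub_im, Complex.neg_re, Complex.neg_im, Complex.one_re, Complex.one_im,
    Complex.I_re, Complex.I_im, Complex.conj_re, Complex.conj_im]
  nlinarith [sq_nonneg ((b1*a1 + b2*a2) - (b2*a1 - b1*a2)), sq_nonneg (b1*a1 + b2*a2),
    mul_nonneg (by positivity : (0:ℝ) ≤ a1^2 + a2^2) (sq_nonneg (2*(b1*a1 + b2*a2) - (b2*a1 - b1*a2))),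
    mul_nonneg (by positivity : (0:ℝ) ≤ a1^2 + a2^2) (sq_nonneg (b1*a1 + b2*a2))]

lemma conj_cq (z : ℂ) :
    (starRingEnd ℂ) (cubicGL z + quinticGL z)
      = (-1 - Complex.I) * (((starRingEnd ℂ) z)^2 * z + ((starRingEnd ℂ) z)^3 * z^2) := by
  have h2 : (((‖z‖ : ℝ)) : ℂ)^2 = z * (starRingEnd ℂ) z := by
    rw [← Complex.ofReal_pow, Complex.sq_norm, Complex.mul_conj]
  have h4 : (((‖z‖ : ℝ)) : ℂ)^4 = (z * (starRingEnd ℂ) z)^2 := by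
    rw [show (4:ℕ) = 2*2 from rfl, pow_mul, h2]
  simp only [cubicGL, quinticGL, h2, h4, map_add, map_mul, map_pow, map_sub, map_neg, map_one,
    Complex.conj_conj, Complex.conj_I]
  ring

/-- For every `C²` function `A : [0,1] → ℂ` vanishing at the endpoints,
`Re ∫₀¹ (-A'') conj(𝓕(A) + 𝓖(A)) ≤ 0`. -/
theorem re_integral_neg_second_deriv_mul_conj_cubic_quintic_nonpos
    (A A' A'' : ℝ → ℂ)
    (hA : ∀ x ∈ Icc (0:ℝ) 1, HasDerivAt A (A' x) x)
    (hA' : ∀ x ∈ Icc (0:ℝ) 1, HasDerivAt A' (A'' x) x)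
    (hA'' : ContinuousOn A'' (Icc (0:ℝ) 1))
    (h0 : A 0 = 0) (h1 : A 1 = 0) :
    (∫ x in (0:ℝ)..1, (-(A'' x)) * (starRingEnd ℂ)
        (cubicGL (A x) + quinticGL (A x))).re ≤ 0 := by
  have h01 : (0:ℝ) ≤ 1 := by norm_num
  have huIcc : uIcc (0:ℝ) 1 = Icc 0 1 := uIcc_of_le h01
  set c : ℂ := -1 - Complex.I with hc
  set B : ℝ → ℂ := fun x => (starRingEnd ℂ) (A x) with hB
  set B' : ℝ → ℂ := fun x => (starRingEnd ℂ) (A' x) with hB'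
  set h : ℝ → ℂ := fun x => c * (B x * B x * A x + B x * B x * B x * (A x * A x)) with hh
  set D : ℝ → ℂ := fun x => c *
    ((B' x * B x + B x * B' x) * A x + B x * B x * A' x
      + (((B' x * B x + B x * B' x) * B x + B x * B x * B' x) * (A x * A x)
        + B x * B x * B x * (A' x * A x + A x * A' x))) with hD
  have hBd : ∀ x ∈ Icc (0:ℝ) 1, HasDerivAt B (B' x) x := fun x hx => (hA x hx).star
  have hhd : ∀ x ∈ uIcc (0:ℝ) 1, HasDerivAt h (D x) x := by
    rw [huIcc]
    intro x hx
    exact ((((hBd x hx).mul (hBd x hx)).mul (hA x hx)).add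
      ((((hBd x hx).mul (hBd x hx)).mul (hBd x hx)).mul
        ((hA x hx).mul (hA x hx)))).const_mul c
  have hAc : ContinuousOn A (Icc (0:ℝ) 1) :=
    fun x hx => ((hA x hx).continuousAt).continuousWithinAt
  have hA'c : ContinuousOn A' (Icc (0:ℝ) 1) :=
    fun x hx => ((hA' x hx).continuousAt).continuousWithinAt
  have hB'c : ContinuousOn B' (Icc (0:ℝ) 1) := Complex.continuous_conj.comp_continuousOn hA'c
  have hBc : ContinuousOn B (Icc (0:ℝ) 1) := Complex.continuous_conj.comp_continuousOn hAc
  have hDc : ContinuousOn D (Icc (0:ℝ) 1) := by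
    apply ContinuousOn.mul continuousOn_const
    exact ((((hB'c.mul hBc).add (hBc.mul hB'c)).mul hAc).add ((hBc.mul hBc).mul hA'c)).add
      (((((hB'c.mul hBc).add (hBc.mul hB'c)).mul hBc).add ((hBc.mul hBc).mul hB'c)).mul
          (hAc.mul hAc) |>.add
        (((hBc.mul hBc).mul hBc).mul ((hA'c.mul hAc).add (hAc.mul hA'c))))
  have hDint : IntervalIntegrable D volume 0 1 := (hDc.mono (by rw [huIcc])).intervalIntegrable
  have hA''int : IntervalIntegrable A'' volume 0 1 :=
    (hA''.mono (by rw [huIcc])).intervalIntegrable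
  have hv : ∀ x ∈ uIcc (0:ℝ) 1, HasDerivAt A' (A'' x) x := by rw [huIcc]; exact hA'
  have ibp := intervalIntegral.integral_mul_deriv_eq_deriv_mul hhd hv hDint hA''int
  have hh0 : h 0 = 0 := by simp [hh, hB, h0]
  have hh1 : h 1 = 0 := by simp [hh, hB, h1]
  have heq : (∫ x in (0:ℝ)..1, (-(A'' x)) * (starRingEnd ℂ)
      (cubicGL (A x) + quinticGL (A x))) = ∫ x in (0:ℝ)..1, D x * A' x := by
    have : (∫ x in (0:ℝ)..1, (-(A'' x)) * (starRingEnd ℂ)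
        (cubicGL (A x) + quinticGL (A x))) = ∫ x in (0:ℝ)..1, -(h x * A'' x) := by
      apply intervalIntegral.integral_congr
      intro x _
      simp only [conj_cq, hh, hB]
      ring
    rw [this, intervalIntegral.integral_neg, ibp, hh0, hh1]
    simp
  rw [heq]
  have hint : IntervalIntegrable (fun x => D x * A' x) volume 0 1 :=
    ((hDc.mul hA'c).mono (by rw [huIcc])).intervalIntegrable
  rw [intervalIntegral.integral_of_le h01]
  rw [← RCLike.re_to_complex,
    ← integral_re ((intervalIntegrable_iff_integrableOn_Ioc_of_le h01).mp hint)]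
  apply setIntegral_nonpos measurableSet_Ioc
  intro x _
  simpa [hD, hc, hB, hB'] using ptwise (A x) (A' x)
end

section
/- Let β > 0, η > 0, κ ∈ ℝ, λ > 0, T > 0 and set α := βλ/2 − η; assume α > 0 and assume the Poincaré hypothesis with constant λ. Let A : [0,1] → ℂ be continuous and let u, v be classical solutions on [0,T] of the complex cubic–quintic Ginzburg–Landau equation with frozen component A with homogeneous Dirichlet boundary conditions. Then for every t ∈ [0,T], ∫₀¹ |u(t,x) − v(t,x)|² dx ≤ e^{−2αt} ∫₀¹ |u(0,x) − v(0,x)|² dx. -/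
open Set MeasureTheory Filter Topology
open scoped Interval

/-- The Poincaré hypothesis with constant `lam > 0`: every `C¹` function
`w : [0,1] → ℂ` vanishing at the endpoints satisfies
`∫₀¹ |w'|² ≥ lam ∫₀¹ |w|²`. -/
def PoincareHyp (lam : ℝ) : Prop :=
  ∀ (w w' : ℝ → ℂ),
    (∀ x ∈ Icc (0:ℝ) 1, HasDerivAt w (w' x) x) →
    ContinuousOn w' (Icc (0:ℝ) 1) →
    w 0 = 0 → w 1 = 0 →
    lam * ∫ x in (0:ℝ)..1, ‖w x‖^2
      ≤ ∫ x in (0:ℝ)..1, ‖w' x‖^2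

/-- Classical solution on `[0,T] × [0,1]` of the complex cubic–quintic
Ginzburg–Landau equation with frozen component `A`:
`∂_t u = (i+β)∂²_x u + (-1+i)|u|²u + (-1+i)|u|⁴u + η u + iκ A`,
with homogeneous Dirichlet boundary conditions. -/
def IsClassicalSolutionCQGL (β η κ T : ℝ) (A : ℝ → ℂ) (u : ℝ → ℝ → ℂ) : Prop :=
  ∃ ut ux uxx : ℝ → ℝ → ℂ,
    ContinuousOn (fun p : ℝ × ℝ => u p.1 p.2) (Icc 0 T ×ˢ Icc 0 1) ∧
    ContinuousOn (fun p : ℝ × ℝ => ut p.1 p.2) (Icc 0 T ×ˢ Icc 0 1) ∧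
    ContinuousOn (fun p : ℝ × ℝ => ux p.1 p.2) (Icc 0 T ×ˢ Icc 0 1) ∧
    ContinuousOn (fun p : ℝ × ℝ => uxx p.1 p.2) (Icc 0 T ×ˢ Icc 0 1) ∧
    (∀ t ∈ Icc (0:ℝ) T, ∀ x ∈ Icc (0:ℝ) 1,
      HasDerivAt (fun τ => u τ x) (ut t x) t) ∧
    (∀ t ∈ Icc (0:ℝ) T, ∀ x ∈ Icc (0:ℝ) 1,
      HasDerivAt (fun ξ => u t ξ) (ux t x) x) ∧
    (∀ t ∈ Icc (0:ℝ) T, ∀ x ∈ Icc (0:ℝ) 1,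
      HasDerivAt (fun ξ => ux t ξ) (uxx t x) x) ∧
    (∀ t ∈ Ioo (0:ℝ) T, ∀ x ∈ Ioo (0:ℝ) 1,
      ut t x = (Complex.I + (β : ℂ)) * uxx t x
        + (-1 + Complex.I) * ((‖u t x‖ : ℝ) : ℂ)^2 * u t x
        + (-1 + Complex.I) * ((‖u t x‖ : ℝ) : ℂ)^4 * u t x
        + (η : ℂ) * u t x + Complex.I * (κ : ℂ) * A x) ∧
    (∀ t ∈ Icc (0:ℝ) T, u t 0 = 0 ∧ u t 1 = 0)

private lemma cqgl_key1 (x y p q : ℝ) (h : p^2+q^2 = x*y) :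
    (x+y)*p + (x-y)*q ≤ x^2+y^2 := by
  nlinarith [sq_nonneg (x^2+y^2 - ((x+y)*p + (x-y)*q)),
    sq_nonneg ((x+y)*q - (x-y)*p), sq_nonneg (x-y),
    mul_nonneg (by positivity : (0:ℝ) ≤ x^2+y^2) (sq_nonneg (x-y)),
    sq_nonneg (x+y)]

private lemma cqgl_key2 (x y p q : ℝ) (hx : 0 ≤ x) (hy : 0 ≤ y) (h : p^2+q^2 = x*y) :
    (x^2+y^2)*p + (x^2-y^2)*q ≤ x^3+y^3 := by
  have h8 : 2*(x^4+y^4)*(p^2+q^2) = 2*(x^4+y^4)*(x*y) := by rw [h]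
  nlinarith [sq_nonneg (x^3+y^3 - ((x^2+y^2)*p + (x^2-y^2)*q)),
    sq_nonneg ((x^2+y^2)*q - (x^2-y^2)*p), h8,
    mul_nonneg (sq_nonneg (x-y)) (by nlinarith [sq_nonneg (x^2-y^2), sq_nonneg (x*y)] :
      (0:ℝ) ≤ x^4 - x^2*y^2 + y^4),
    add_nonneg (pow_nonneg hx 3) (pow_nonneg hy 3),
    mul_nonneg (mul_nonneg hx hy) (sq_nonneg (x-y)),
    mul_nonneg hx hy]

/-- Pointwise dissipativity of the cubic–quintic nonlinearity with coefficient `-1 + i`. -/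
private lemma cqgl_nonlin_dissip (z w : ℂ) :
    (((-1 + Complex.I) * ((‖z‖ : ℝ) : ℂ)^2 * z
      + (-1 + Complex.I) * ((‖z‖ : ℝ) : ℂ)^4 * z
      - ((-1 + Complex.I) * ((‖w‖ : ℝ) : ℂ)^2 * w
      + (-1 + Complex.I) * ((‖w‖ : ℝ) : ℂ)^4 * w))
      * (starRingEnd ℂ) (z - w)).re ≤ 0 := by
  have hz2 : ((‖z‖ : ℝ) : ℂ)^2 = ((Complex.normSq z : ℝ) : ℂ) := by
    rw [← Complex.ofReal_pow, Complex.sq_norm]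
  have hz4 : ((‖z‖ : ℝ) : ℂ)^4 = ((Complex.normSq z ^ 2 : ℝ) : ℂ) := by
    rw [← Complex.ofReal_pow, show ‖z‖ ^ 4 = (‖z‖ ^ 2)^2 by ring,
      Complex.sq_norm, Complex.ofReal_pow]
  have hw2 : ((‖w‖ : ℝ) : ℂ)^2 = ((Complex.normSq w : ℝ) : ℂ) := by
    rw [← Complex.ofReal_pow, Complex.sq_norm]
  have hw4 : ((‖w‖ : ℝ) : ℂ)^4 = ((Complex.normSq w ^ 2 : ℝ) : ℂ) := by
    rw [← Complex.ofReal_pow, show ‖w‖ ^ 4 = (‖w‖ ^ 2)^2 by ring,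
      Complex.sq_norm, Complex.ofReal_pow]
  rw [hz2, hz4, hw2, hw4]
  have k1 := cqgl_key1 (z.re^2+z.im^2) (w.re^2+w.im^2) (z.re*w.re+z.im*w.im)
    (z.im*w.re-z.re*w.im) (by ring)
  have k2 := cqgl_key2 (z.re^2+z.im^2) (w.re^2+w.im^2) (z.re*w.re+z.im*w.im)
    (z.im*w.re-z.re*w.im) (by positivity) (by positivity) (by ring)
  simp only [Complex.mul_re, Complex.mul_im, Complex.add_re, Complex.add_im, Complex.sub_re,
    Complex.sub_im, Complex.neg_re, Complex.neg_im, Complex.I_re, Complex.I_im, Complex.one_re,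
    Complex.one_im, Complex.ofReal_re, Complex.ofReal_im, Complex.conj_re, Complex.conj_im,
    Complex.normSq_apply]
  ring_nf
  ring_nf at k1 k2
  linarith [k1, k2]

/-- Derivative of the squared modulus of a complex-valued function of a real variable. -/
private lemma cqgl_hasDerivAt_abs_sq {f : ℝ → ℂ} {f' : ℂ} {τ : ℝ} (h : HasDerivAt f f' τ) :
    HasDerivAt (fun s => ‖f s‖^2) (2 * ((starRingEnd ℂ) (f τ) * f').re) τ := by
  have h1 : HasDerivAt (fun s => f s * (starRingEnd ℂ) (f s))
      (f' * (starRingEnd ℂ) (f τ) + f τ * (starRingEnd ℂ) f') τ := h.mul h.star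
  have h2 := Complex.reCLM.hasFDerivAt.comp_hasDerivAt τ h1
  have h3 : (fun s => Complex.reCLM (f s * (starRingEnd ℂ) (f s)))
      = fun s => ‖f s‖^2 := by
    funext s
    simp [Complex.mul_conj, Complex.normSq_eq_norm_sq, ← Complex.ofReal_pow]
  rw [Function.comp_def, h3] at h2
  refine h2.congr_deriv ?_
  simp only [Complex.reCLM_apply, Complex.add_re, Complex.mul_re, Complex.conj_re,
    Complex.conj_im]
  ring

private lemma cqgl_slice {E : Type*} [TopologicalSpace E] {f : ℝ × ℝ → E} {T t : ℝ}
    (hg : ContinuousOn f (Icc 0 T ×ˢ Icc 0 1))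
    (ht : t ∈ Icc (0:ℝ) T) : ContinuousOn (fun x => f (t, x)) (Icc (0:ℝ) 1) :=
  hg.comp (Continuous.continuousOn (continuous_const.prodMk continuous_id))
    (fun x hx => Set.mk_mem_prod ht hx)

private lemma cqgl_ii {E : Type*} [NormedAddCommGroup E] {f : ℝ → E}
    (hf : ContinuousOn f (Icc (0:ℝ) 1)) : IntervalIntegrable f volume 0 1 :=
  (hf.mono (by rw [uIcc_of_le (by norm_num : (0:ℝ) ≤ 1)])).intervalIntegrable

set_option maxHeartbeats 1000000 in
/-- Exponential contraction between two classical solutions of the frozen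
cubic–quintic Ginzburg–Landau equation. -/
theorem cqgl_contraction
    (β η κ lam T : ℝ) (hβ : 0 < β) (hη : 0 < η) (hlam : 0 < lam) (hT : 0 < T)
    (hα : 0 < β * lam / 2 - η) (hP : PoincareHyp lam)
    (A : ℝ → ℂ) (hA : ContinuousOn A (Icc (0:ℝ) 1))
    (u v : ℝ → ℝ → ℂ)
    (hu : IsClassicalSolutionCQGL β η κ T A u)
    (hv : IsClassicalSolutionCQGL β η κ T A v)
    (t : ℝ) (ht : t ∈ Icc (0:ℝ) T) :
    ∫ x in (0:ℝ)..1, ‖u t x - v t x‖^2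
      ≤ Real.exp (-2 * (β * lam / 2 - η) * t) *
        ∫ x in (0:ℝ)..1, ‖u 0 x - v 0 x‖^2 := by
  obtain ⟨ut, ux, uxx, hucont, hutcont, huxcont, huxxcont, hut, hux, huxx, hupde, hubc⟩ := hu
  obtain ⟨vt, vx, vxx, hvcont, hvtcont, hvxcont, hvxxcont, hvt, hvx, hvxx, hvpde, hvbc⟩ := hv
  set K : ℝ := 2*η - β*lam with hK
  set E : ℝ → ℝ := fun s => ∫ x in (0:ℝ)..1, ‖u s x - v s x‖^2 with hE
  set D : ℝ → ℝ := fun s => ∫ x in (0:ℝ)..1,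
      2 * ((starRingEnd ℂ) (u s x - v s x) * (ut s x - vt s x)).re with hD
  -- joint continuity of the differences
  have hWcont : ContinuousOn (fun p : ℝ × ℝ => u p.1 p.2 - v p.1 p.2)
      (Icc 0 T ×ˢ Icc 0 1) := hucont.sub hvcont
  have hWtcont : ContinuousOn (fun p : ℝ × ℝ => ut p.1 p.2 - vt p.1 p.2)
      (Icc 0 T ×ˢ Icc 0 1) := hutcont.sub hvtcont
  -- nonnegativity of E
  have hEnn : ∀ s : ℝ, 0 ≤ E s := by
    intro s
    exact intervalIntegral.integral_nonneg (by norm_num) (fun x _ => by positivity)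
  -- continuity of E on [0,T]
  have hEcont : ContinuousOn E (Icc 0 T) := by
    set cT : ℝ → ℝ := fun s => max 0 (min T s) with hcT
    set cX : ℝ → ℝ := fun y => max 0 (min 1 y) with hcX
    have hcTmem : ∀ s, cT s ∈ Icc (0:ℝ) T :=
      fun s => ⟨le_max_left _ _, max_le hT.le (min_le_left _ _)⟩
    have hcXmem : ∀ y, cX y ∈ Icc (0:ℝ) 1 :=
      fun y => ⟨le_max_left _ _, max_le zero_le_one (min_le_left _ _)⟩
    have hcTc : Continuous cT := continuous_const.max (continuous_const.min continuous_id)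
    have hcXc : Continuous cX := continuous_const.max (continuous_const.min continuous_id)
    have hG : Continuous (Function.uncurry
        (fun s y => ‖u (cT s) (cX y) - v (cT s) (cX y)‖^2)) := by
      have h1 : Continuous (fun p : ℝ × ℝ => u (cT p.1) (cX p.2) - v (cT p.1) (cX p.2)) :=
        hWcont.comp_continuous
          ((hcTc.comp continuous_fst).prodMk (hcXc.comp continuous_snd))
          (fun p => Set.mk_mem_prod (hcTmem _) (hcXmem _))
      exact (continuous_norm.comp h1).pow 2
    have hEC := intervalIntegral.continuous_parametric_intervalIntegral_of_continuous'
      (μ := volume) hG 0 1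
    apply hEC.continuousOn.congr
    intro s hs
    rw [hE]
    apply intervalIntegral.integral_congr
    intro y hy
    rw [uIcc_of_le (by norm_num : (0:ℝ) ≤ 1)] at hy
    have e1 : cT s = s := by
      rw [hcT]; simp only []; rw [min_eq_right hs.2, max_eq_right hs.1]
    have e2 : cX y = y := by
      rw [hcX]; simp only []; rw [min_eq_right hy.2, max_eq_right hy.1]
    simp only [e1, e2]
  -- derivative of E at interior times
  have hderiv : ∀ t₀ ∈ Ioo (0:ℝ) T, HasDerivAt E (D t₀) t₀ := by
    intro t₀ ht₀
    obtain ⟨C1, hC1⟩ := (isCompact_Icc.prod isCompact_Icc).exists_bound_of_continuousOn hWcont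
    obtain ⟨C2, hC2⟩ := (isCompact_Icc.prod isCompact_Icc).exists_bound_of_continuousOn hWtcont
    set ε : ℝ := min t₀ (T - t₀) with hε
    have hεpos : 0 < ε := lt_min ht₀.1 (sub_pos.2 ht₀.2)
    have hball : Metric.ball t₀ ε ⊆ Icc (0:ℝ) T := by
      intro τ hτ
      rw [Real.ball_eq_Ioo] at hτ
      constructor
      · have := min_le_left t₀ (T - t₀); have := hτ.1; simp only [hε] at this ⊢; linarith
      · have := min_le_right t₀ (T - t₀); have := hτ.2; simp only [hε] at this ⊢; linarith
    have ht₀Icc : t₀ ∈ Icc (0:ℝ) T := ⟨ht₀.1.le, ht₀.2.le⟩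
    have hIsub : Ι (0:ℝ) 1 ⊆ Icc (0:ℝ) 1 := by
      rw [uIoc_of_le (by norm_num : (0:ℝ) ≤ 1)]; exact Ioc_subset_Icc_self
    have hmeas : ∀ τ ∈ Icc (0:ℝ) T,
        AEStronglyMeasurable (fun x => ‖u τ x - v τ x‖^2)
          (volume.restrict (Ι (0:ℝ) 1)) := by
      intro τ hτ
      have hc : ContinuousOn (fun x => ‖u τ x - v τ x‖^2) (Ι (0:ℝ) 1) :=
        ((continuous_norm.comp_continuousOn (cqgl_slice hWcont hτ)).pow 2).mono hIsub
      exact hc.aestronglyMeasurable measurableSet_uIoc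
    have hF'cont : ContinuousOn
        (fun x => 2 * ((starRingEnd ℂ) (u t₀ x - v t₀ x) * (ut t₀ x - vt t₀ x)).re)
        (Icc (0:ℝ) 1) := by
      have s1 := cqgl_slice hWcont ht₀Icc
      have s2 := cqgl_slice hWtcont ht₀Icc
      exact continuousOn_const.mul (Complex.continuous_re.comp_continuousOn
        ((continuous_star.comp_continuousOn s1).mul s2))
    have h_bd : ∀ᵐ x ∂(volume : Measure ℝ), x ∈ Ι (0:ℝ) 1 → ∀ τ ∈ Metric.ball t₀ ε,
        ‖2 * ((starRingEnd ℂ) (u τ x - v τ x) * (ut τ x - vt τ x)).re‖ ≤ 2 * (C1 * C2) := by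
      refine Filter.Eventually.of_forall (fun x hx τ hτ => ?_)
      have hτIcc : τ ∈ Icc (0:ℝ) T := hball hτ
      have hxIcc : x ∈ Icc (0:ℝ) 1 := hIsub hx
      have h1 : ‖u τ x - v τ x‖ ≤ C1 := hC1 (τ, x) ⟨hτIcc, hxIcc⟩
      have h2 : ‖ut τ x - vt τ x‖ ≤ C2 := hC2 (τ, x) ⟨hτIcc, hxIcc⟩
      have habs : |((starRingEnd ℂ) (u τ x - v τ x) * (ut τ x - vt τ x)).re|
          ≤ ‖(starRingEnd ℂ) (u τ x - v τ x) * (ut τ x - vt τ x)‖ := by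
        exact Complex.abs_re_le_norm _
      have hmm : ‖(starRingEnd ℂ) (u τ x - v τ x) * (ut τ x - vt τ x)‖
          = ‖u τ x - v τ x‖ * ‖ut τ x - vt τ x‖ := by
        rw [norm_mul, starRingEnd_apply, norm_star]
      have hfin : ‖u τ x - v τ x‖ * ‖ut τ x - vt τ x‖ ≤ C1 * C2 :=
        mul_le_mul h1 h2 (norm_nonneg _) ((norm_nonneg _).trans h1)
      calc ‖2 * ((starRingEnd ℂ) (u τ x - v τ x) * (ut τ x - vt τ x)).re‖
          = 2 * |((starRingEnd ℂ) (u τ x - v τ x) * (ut τ x - vt τ x)).re| := by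
            rw [Real.norm_eq_abs, abs_mul]; norm_num
        _ ≤ 2 * (C1 * C2) := by rw [hmm] at habs; linarith
    have h_df : ∀ᵐ x ∂(volume : Measure ℝ), x ∈ Ι (0:ℝ) 1 → ∀ τ ∈ Metric.ball t₀ ε,
        HasDerivAt (fun τ => ‖u τ x - v τ x‖^2)
          (2 * ((starRingEnd ℂ) (u τ x - v τ x) * (ut τ x - vt τ x)).re) τ := by
      refine Filter.Eventually.of_forall (fun x hx τ hτ => ?_)
      have hτIcc : τ ∈ Icc (0:ℝ) T := hball hτ
      have hxIcc : x ∈ Icc (0:ℝ) 1 := hIsub hx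
      exact cqgl_hasDerivAt_abs_sq ((hut τ hτIcc x hxIcc).sub (hvt τ hτIcc x hxIcc))
    have hdom := intervalIntegral.hasDerivAt_integral_of_dominated_loc_of_deriv_le
      (F := fun τ x => ‖u τ x - v τ x‖^2)
      (F' := fun τ x => 2 * ((starRingEnd ℂ) (u τ x - v τ x) * (ut τ x - vt τ x)).re)
      (a := 0) (b := 1) (μ := volume) (bound := fun _ => 2 * (C1 * C2))
      (Metric.ball_mem_nhds t₀ hεpos)
      (Filter.eventually_of_mem (Metric.ball_mem_nhds t₀ hεpos)
        (fun τ hτ => hmeas τ (hball hτ)))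
      (cqgl_ii ((continuous_norm.comp_continuousOn (cqgl_slice hWcont ht₀Icc)).pow 2))
      ((hF'cont.mono hIsub).aestronglyMeasurable measurableSet_uIoc)
      h_bd intervalIntegrable_const h_df
    exact hdom.2
  -- the differential inequality
  have hWxcont : ContinuousOn (fun p : ℝ × ℝ => ux p.1 p.2 - vx p.1 p.2)
      (Icc 0 T ×ˢ Icc 0 1) := huxcont.sub hvxcont
  have hWxxcont : ContinuousOn (fun p : ℝ × ℝ => uxx p.1 p.2 - vxx p.1 p.2)
      (Icc 0 T ×ˢ Icc 0 1) := huxxcont.sub hvxxcont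
  have hbound : ∀ t₀ ∈ Ioo (0:ℝ) T, D t₀ ≤ K * E t₀ := by
    intro t₀ ht₀
    have ht₀Icc : t₀ ∈ Icc (0:ℝ) T := ⟨ht₀.1.le, ht₀.2.le⟩
    have huI : uIcc (0:ℝ) 1 = Icc 0 1 := uIcc_of_le (by norm_num)
    -- slice continuities at time t₀
    have sU : ContinuousOn (fun x => u t₀ x) (Icc (0:ℝ) 1) := cqgl_slice hucont ht₀Icc
    have sV : ContinuousOn (fun x => v t₀ x) (Icc (0:ℝ) 1) := cqgl_slice hvcont ht₀Icc
    have sW : ContinuousOn (fun x => u t₀ x - v t₀ x) (Icc (0:ℝ) 1) :=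
      cqgl_slice hWcont ht₀Icc
    have sWx : ContinuousOn (fun x => ux t₀ x - vx t₀ x) (Icc (0:ℝ) 1) :=
      cqgl_slice hWxcont ht₀Icc
    have sWxx : ContinuousOn (fun x => uxx t₀ x - vxx t₀ x) (Icc (0:ℝ) 1) :=
      cqgl_slice hWxxcont ht₀Icc
    have sWc : ContinuousOn (fun x => (starRingEnd ℂ) (u t₀ x - v t₀ x)) (Icc (0:ℝ) 1) :=
      continuous_star.comp_continuousOn sW
    have sWxc : ContinuousOn (fun x => (starRingEnd ℂ) (ux t₀ x - vx t₀ x)) (Icc (0:ℝ) 1) :=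
      continuous_star.comp_continuousOn sWx
    have aU : ContinuousOn (fun x => ((‖u t₀ x‖ : ℝ) : ℂ)) (Icc (0:ℝ) 1) :=
      Complex.continuous_ofReal.comp_continuousOn (continuous_norm.comp_continuousOn sU)
    have aV : ContinuousOn (fun x => ((‖v t₀ x‖ : ℝ) : ℂ)) (Icc (0:ℝ) 1) :=
      Complex.continuous_ofReal.comp_continuousOn (continuous_norm.comp_continuousOn sV)
    -- the three pieces of the integrand
    set g1 : ℝ → ℝ := fun x => 2 * ((Complex.I + (β:ℂ)) *
        ((starRingEnd ℂ) (u t₀ x - v t₀ x) * (uxx t₀ x - vxx t₀ x))).re with hg1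
    set g2 : ℝ → ℝ := fun x => 2 * (((-1 + Complex.I) * ((‖u t₀ x‖ : ℝ) : ℂ)^2 * u t₀ x
        + (-1 + Complex.I) * ((‖u t₀ x‖ : ℝ) : ℂ)^4 * u t₀ x
        - ((-1 + Complex.I) * ((‖v t₀ x‖ : ℝ) : ℂ)^2 * v t₀ x
        + (-1 + Complex.I) * ((‖v t₀ x‖ : ℝ) : ℂ)^4 * v t₀ x))
        * (starRingEnd ℂ) (u t₀ x - v t₀ x)).re with hg2
    set g3 : ℝ → ℝ := fun x => 2 * η * ‖u t₀ x - v t₀ x‖^2 with hg3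
    have cg1 : ContinuousOn g1 (Icc (0:ℝ) 1) :=
      continuousOn_const.mul (Complex.continuous_re.comp_continuousOn
        (continuousOn_const.mul (sWc.mul sWxx)))
    have cg2 : ContinuousOn g2 (Icc (0:ℝ) 1) :=
      continuousOn_const.mul (Complex.continuous_re.comp_continuousOn
        (((((continuousOn_const.mul (aU.pow 2)).mul sU).add
            ((continuousOn_const.mul (aU.pow 4)).mul sU)).sub
          (((continuousOn_const.mul (aV.pow 2)).mul sV).add
            ((continuousOn_const.mul (aV.pow 4)).mul sV))).mul sWc))
    have cg3 : ContinuousOn g3 (Icc (0:ℝ) 1) :=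
      continuousOn_const.mul ((continuous_norm.comp_continuousOn sW).pow 2)
    have ii1 : IntervalIntegrable g1 volume 0 1 := cqgl_ii cg1
    have ii2 : IntervalIntegrable g2 volume 0 1 := cqgl_ii cg2
    have ii3 : IntervalIntegrable g3 volume 0 1 := cqgl_ii cg3
    -- pointwise identity from the PDE, at interior points
    have hident : ∀ x ∈ Ioo (0:ℝ) 1,
        2 * ((starRingEnd ℂ) (u t₀ x - v t₀ x) * (ut t₀ x - vt t₀ x)).re
          = g1 x + g2 x + g3 x := by
      intro x hx
      have h1 : (starRingEnd ℂ) (u t₀ x - v t₀ x) * (ut t₀ x - vt t₀ x)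
          = (Complex.I + (β:ℂ)) *
              ((starRingEnd ℂ) (u t₀ x - v t₀ x) * (uxx t₀ x - vxx t₀ x))
            + ((-1 + Complex.I) * ((‖u t₀ x‖ : ℝ) : ℂ)^2 * u t₀ x
              + (-1 + Complex.I) * ((‖u t₀ x‖ : ℝ) : ℂ)^4 * u t₀ x
              - ((-1 + Complex.I) * ((‖v t₀ x‖ : ℝ) : ℂ)^2 * v t₀ x
              + (-1 + Complex.I) * ((‖v t₀ x‖ : ℝ) : ℂ)^4 * v t₀ x))
              * (starRingEnd ℂ) (u t₀ x - v t₀ x)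
            + (η : ℂ) * ((u t₀ x - v t₀ x) * (starRingEnd ℂ) (u t₀ x - v t₀ x)) := by
        rw [hupde t₀ ht₀ x hx, hvpde t₀ ht₀ x hx]
        ring
      have h3 : ((η : ℂ) * ((u t₀ x - v t₀ x) * (starRingEnd ℂ) (u t₀ x - v t₀ x))).re
          = η * ‖u t₀ x - v t₀ x‖^2 := by
        rw [Complex.mul_conj, ← Complex.ofReal_mul, Complex.ofReal_re, Complex.normSq_eq_norm_sq]
      rw [h1]
      simp only [Complex.add_re, h3, hg1, hg2, hg3]
      ring
    -- the same identity holds a.e. on the interval of integration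
    have hae : ∀ᵐ x ∂(volume : Measure ℝ), x ∈ Ι (0:ℝ) 1 →
        2 * ((starRingEnd ℂ) (u t₀ x - v t₀ x) * (ut t₀ x - vt t₀ x)).re
          = g1 x + g2 x + g3 x := by
      have hne : ∀ᵐ x ∂(volume : Measure ℝ), x ∉ ({1} : Set ℝ) :=
        measure_eq_zero_iff_ae_notMem.1 (measure_singleton 1)
      filter_upwards [hne] with x hx1 hxI
      rw [uIoc_of_le (by norm_num : (0:ℝ) ≤ 1)] at hxI
      have : x ∈ Ioo (0:ℝ) 1 := ⟨hxI.1, lt_of_le_of_ne hxI.2 (fun h => hx1 (by simp [h]))⟩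
      exact hident x this
    -- splitting the integral
    have hDsplit : D t₀ = (∫ x in (0:ℝ)..1, g1 x) + (∫ x in (0:ℝ)..1, g2 x)
        + ∫ x in (0:ℝ)..1, g3 x := by
      show (∫ x in (0:ℝ)..1,
          2 * ((starRingEnd ℂ) (u t₀ x - v t₀ x) * (ut t₀ x - vt t₀ x)).re) = _
      rw [intervalIntegral.integral_congr_ae hae,
        intervalIntegral.integral_add (ii1.add ii2) ii3,
        intervalIntegral.integral_add ii1 ii2]
    -- the nonlinear term is dissipative
    have hg2le : (∫ x in (0:ℝ)..1, g2 x) ≤ 0 := by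
      have hmono := intervalIntegral.integral_mono_on (by norm_num : (0:ℝ) ≤ 1) ii2
        (intervalIntegrable_const (c := (0:ℝ))) (fun x _ => by
          have := cqgl_nonlin_dissip (u t₀ x) (v t₀ x)
          simp only [hg2]
          linarith)
      simpa using hmono
    -- the linear term
    have hg3eq : (∫ x in (0:ℝ)..1, g3 x) = 2 * η * E t₀ := by
      simp only [hg3]
      rw [intervalIntegral.integral_const_mul]
    -- integration by parts for the diffusion term
    set r : ℝ := ∫ x in (0:ℝ)..1, ‖ux t₀ x - vx t₀ x‖^2 with hr
    have iiA : IntervalIntegrable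
        (fun x => (starRingEnd ℂ) (ux t₀ x - vx t₀ x) * (ux t₀ x - vx t₀ x)) volume 0 1 :=
      cqgl_ii (sWxc.mul sWx)
    have iiB : IntervalIntegrable
        (fun x => (starRingEnd ℂ) (u t₀ x - v t₀ x) * (uxx t₀ x - vxx t₀ x)) volume 0 1 :=
      cqgl_ii (sWc.mul sWxx)
    have hibp : (∫ x in (0:ℝ)..1,
        ((starRingEnd ℂ) (ux t₀ x - vx t₀ x) * (ux t₀ x - vx t₀ x)
          + (starRingEnd ℂ) (u t₀ x - v t₀ x) * (uxx t₀ x - vxx t₀ x))) = 0 := by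
      have hder : ∀ x ∈ uIcc (0:ℝ) 1, HasDerivAt
          (fun y => (starRingEnd ℂ) (u t₀ y - v t₀ y) * (ux t₀ y - vx t₀ y))
          ((starRingEnd ℂ) (ux t₀ x - vx t₀ x) * (ux t₀ x - vx t₀ x)
            + (starRingEnd ℂ) (u t₀ x - v t₀ x) * (uxx t₀ x - vxx t₀ x)) x := by
        intro x hx
        rw [huI] at hx
        have d1 : HasDerivAt (fun y => u t₀ y - v t₀ y) (ux t₀ x - vx t₀ x) x :=
          (hux t₀ ht₀Icc x hx).sub (hvx t₀ ht₀Icc x hx)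
        have d2 : HasDerivAt (fun y => ux t₀ y - vx t₀ y) (uxx t₀ x - vxx t₀ x) x :=
          (huxx t₀ ht₀Icc x hx).sub (hvxx t₀ ht₀Icc x hx)
        exact d1.star.mul d2
      rw [intervalIntegral.integral_eq_sub_of_hasDerivAt hder
        (cqgl_ii ((sWxc.mul sWx).add (sWc.mul sWxx)))]
      simp [(hubc t₀ ht₀Icc).1, (hubc t₀ ht₀Icc).2, (hvbc t₀ ht₀Icc).1, (hvbc t₀ ht₀Icc).2]
    have hAeq : (∫ x in (0:ℝ)..1,
        (starRingEnd ℂ) (ux t₀ x - vx t₀ x) * (ux t₀ x - vx t₀ x)) = ((r : ℝ) : ℂ) := by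
      have h1 : (∫ x in (0:ℝ)..1, (starRingEnd ℂ) (ux t₀ x - vx t₀ x) * (ux t₀ x - vx t₀ x))
          = ∫ x in (0:ℝ)..1, ((‖ux t₀ x - vx t₀ x‖^2 : ℝ) : ℂ) := by
        apply intervalIntegral.integral_congr
        intro y _
        show (starRingEnd ℂ) (ux t₀ y - vx t₀ y) * (ux t₀ y - vx t₀ y)
          = ((‖ux t₀ y - vx t₀ y‖^2 : ℝ) : ℂ)
        rw [mul_comm, Complex.mul_conj, Complex.normSq_eq_norm_sq]
      rw [hr, h1]
      exact_mod_cast RCLike.intervalIntegral_ofReal (𝕜 := ℂ)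
    have hsplit2 : ((r : ℝ) : ℂ) + (∫ x in (0:ℝ)..1,
        (starRingEnd ℂ) (u t₀ x - v t₀ x) * (uxx t₀ x - vxx t₀ x)) = 0 := by
      rw [← hAeq, ← intervalIntegral.integral_add iiA iiB]
      exact hibp
    have hiwc : (∫ x in (0:ℝ)..1,
        (starRingEnd ℂ) (u t₀ x - v t₀ x) * (uxx t₀ x - vxx t₀ x)) = -((r : ℝ) : ℂ) :=
      eq_neg_of_add_eq_zero_right hsplit2
    have hg1eq : (∫ x in (0:ℝ)..1, g1 x) = 2 * (-(β * r)) := by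
      simp only [hg1]
      rw [intervalIntegral.integral_const_mul]
      congr 1
      have hstep : (∫ x in (0:ℝ)..1, ((Complex.I + (β:ℂ)) *
          ((starRingEnd ℂ) (u t₀ x - v t₀ x) * (uxx t₀ x - vxx t₀ x))).re)
          = (Complex.reCLM (∫ x in (0:ℝ)..1, (Complex.I + (β:ℂ)) *
            ((starRingEnd ℂ) (u t₀ x - v t₀ x) * (uxx t₀ x - vxx t₀ x)))) := by
        rw [← ContinuousLinearMap.intervalIntegral_comp_comm _
          (cqgl_ii (f := fun x => (Complex.I + (β:ℂ)) *
            ((starRingEnd ℂ) (u t₀ x - v t₀ x) * (uxx t₀ x - vxx t₀ x)))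
            (continuousOn_const.mul (sWc.mul sWxx)))]
        rfl
      rw [hstep, intervalIntegral.integral_const_mul, hiwc]
      simp only [Complex.reCLM_apply, Complex.mul_re, Complex.add_re, Complex.add_im,
        Complex.I_re, Complex.I_im, Complex.ofReal_re, Complex.ofReal_im, Complex.neg_re,
        Complex.neg_im]
      ring
    -- Poincaré inequality
    have hpoin : lam * E t₀ ≤ r := by
      have hb0 : u t₀ 0 - v t₀ 0 = 0 := by
        rw [(hubc t₀ ht₀Icc).1, (hvbc t₀ ht₀Icc).1, sub_zero]
      have hb1 : u t₀ 1 - v t₀ 1 = 0 := by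
        rw [(hubc t₀ ht₀Icc).2, (hvbc t₀ ht₀Icc).2, sub_zero]
      exact hP (fun x => u t₀ x - v t₀ x) (fun x => ux t₀ x - vx t₀ x)
        (fun x hx => (hux t₀ ht₀Icc x hx).sub (hvx t₀ ht₀Icc x hx)) sWx hb0 hb1
    -- put everything together
    have hEt := hEnn t₀
    have h2b : 0 ≤ 2 * β := by linarith
    have hrr := mul_le_mul_of_nonneg_left hpoin h2b
    rw [hDsplit, hg1eq, hg3eq, hK]
    nlinarith [mul_nonneg (mul_nonneg hβ.le hlam.le) hEt]
  -- Grönwall on [δ, T]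
  have hgron : ∀ δ : ℝ, 0 < δ → δ ≤ t → E t ≤ E δ * Real.exp (K * (t - δ)) := by
    intro δ hδ hδt
    have hδT : δ ≤ T := le_trans hδt ht.2
    have main := le_gronwallBound_of_liminf_deriv_right_le
      (f := E) (f' := D) (δ := E δ) (K := K) (ε := 0) (a := δ) (b := T)
      (hEcont.mono (Icc_subset_Icc hδ.le le_rfl))
      (fun s hs r hr => by
        have hsI : s ∈ Ioo (0:ℝ) T := ⟨lt_of_lt_of_le hδ hs.1, hs.2⟩
        exact ((hderiv s hsI).hasDerivWithinAt).liminf_right_slope_le hr)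
      le_rfl
      (fun s hs => by
        have hsI : s ∈ Ioo (0:ℝ) T := ⟨lt_of_lt_of_le hδ hs.1, hs.2⟩
        simpa using hbound s hsI)
      t ⟨hδt, ht.2⟩
    rwa [gronwallBound_ε0] at main
  -- conclude
  have hKt : -2 * (β * lam / 2 - η) * t = K * t := by rw [hK]; ring
  rcases eq_or_lt_of_le ht.1 with h0 | h0
  · -- t = 0
    rw [← h0]
    simp only [mul_zero, neg_zero, Real.exp_zero, one_mul]
    norm_num
  · -- 0 < t
    have hlim : Tendsto (fun δ : ℝ => E δ * Real.exp (K * (t - δ))) (𝓝[>] (0:ℝ))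
        (𝓝 (E 0 * Real.exp (K * t))) := by
      have h1 : Tendsto E (𝓝[>] (0:ℝ)) (𝓝 (E 0)) := by
        have hmem : (0:ℝ) ∈ Icc (0:ℝ) T := ⟨le_rfl, hT.le⟩
        have h2 := (hEcont 0 hmem).mono_left
          (nhdsWithin_mono (0:ℝ) (Ioc_subset_Icc_self.trans (Icc_subset_Icc le_rfl ht.2)))
        rw [nhdsWithin_Ioc_eq_nhdsGT h0] at h2
        exact h2
      have h3 : Tendsto (fun δ : ℝ => Real.exp (K * (t - δ))) (𝓝[>] (0:ℝ))
          (𝓝 (Real.exp (K * t))) := by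
        have : Tendsto (fun δ : ℝ => Real.exp (K * (t - δ))) (𝓝 (0:ℝ))
            (𝓝 (Real.exp (K * (t - 0)))) :=
          (Real.continuous_exp.comp (continuous_const.mul (continuous_const.sub continuous_id))).tendsto 0
        rw [sub_zero] at this
        exact this.mono_left nhdsWithin_le_nhds
      exact h1.mul h3
    have hev : ∀ᶠ δ in 𝓝[>] (0:ℝ), E t ≤ E δ * Real.exp (K * (t - δ)) := by
      filter_upwards [Ioo_mem_nhdsGT h0] with δ hδ
      exact hgron δ hδ.1 hδ.2.le
    have := ge_of_tendsto hlim hev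
    calc E t ≤ E 0 * Real.exp (K * t) := this
      _ = Real.exp (-2 * (β * lam / 2 - η) * t) * E 0 := by rw [hKt, mul_comm]
end

section
/- Let β > 0, η > 0, κ ∈ ℝ, λ > 0 and set α := βλ/2 − η; assume α > 0 and assume the Poincaré hypothesis with constant λ. Then there exists a constant C > 0, depending only on β, η, κ, λ, such that for every T > 0, every continuous A : [0,1] → ℂ, every classical solution u on [0,T] of the complex cubic–quintic Ginzburg–Landau equation with frozen component A with homogeneous Dirichlet boundary conditions, and every t ∈ [0,T], one has ∫₀¹ |u(t,x)|² dx ≤ e^{−2αt} ∫₀¹ |u(0,x)|² dx + C ∫₀¹ |A(x)|² dx. -/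
open Set MeasureTheory

lemma hasDerivAt_sq_abs {f : ℝ → ℂ} {f' : ℂ} {t : ℝ} (hf : HasDerivAt f f' t) :
    HasDerivAt (fun τ => ‖f τ‖ ^ 2)
      (2 * ((starRingEnd ℂ (f t)) * f').re) t := by
  have hre : HasDerivAt (fun τ => (f τ).re) f'.re t :=
    Complex.reCLM.hasFDerivAt.comp_hasDerivAt t hf
  have him : HasDerivAt (fun τ => (f τ).im) f'.im t :=
    Complex.imCLM.hasFDerivAt.comp_hasDerivAt t hf
  have heq : (fun τ => ‖f τ‖ ^ 2)
      = fun τ => (f τ).re * (f τ).re + (f τ).im * (f τ).im := by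
    funext τ; rw [Complex.sq_norm, Complex.normSq_apply]
  rw [heq]
  convert (hre.fun_mul hre).fun_add (him.fun_mul him) using 1
  · rfl
  · rfl
  simp [Complex.mul_re, Complex.conj_re, Complex.conj_im]
  ring

lemma hasDerivAt_conj' {f : ℝ → ℂ} {f' : ℂ} {t : ℝ} (hf : HasDerivAt f f' t) :
    HasDerivAt (fun τ => (starRingEnd ℂ) (f τ)) ((starRingEnd ℂ) f') t := by
  simpa only [starRingEnd_apply] using hf.star

lemma conj_mul_self (z : ℂ) :
    (starRingEnd ℂ z) * z = ((‖z‖ : ℝ) : ℂ) ^ 2 := by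
  rw [mul_comm, Complex.mul_conj, ← Complex.sq_norm]
  push_cast; ring

lemma cqgl_key (β η κ lam : ℝ) (hβ : 0 < β) (hlam : 0 < lam) (z w a : ℂ) :
    2 * ((starRingEnd ℂ z) * ((Complex.I + (β:ℂ)) * w
        + (-1 + Complex.I) * ((‖z‖ : ℝ) : ℂ)^2 * z
        + (-1 + Complex.I) * ((‖z‖ : ℝ) : ℂ)^4 * z
        + (η:ℂ) * z + Complex.I * (κ:ℂ) * a)).re
      ≤ 2 * ((starRingEnd ℂ z) * ((Complex.I + (β:ℂ)) * w)).re
        + (2*η + β*lam) * ‖z‖ ^ 2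
        + (κ^2/(β*lam)) * ‖a‖ ^ 2 := by
  have hbl : 0 < β * lam := mul_pos hβ hlam
  have hcz := conj_mul_self z
  have h3 : (starRingEnd ℂ z) * ((-1 + Complex.I) * ((‖z‖ : ℝ) : ℂ)^2 * z)
      = (-1 + Complex.I) * ((‖z‖ : ℝ) : ℂ)^4 := by
    rw [show (starRingEnd ℂ z) * ((-1 + Complex.I) * ((‖z‖ : ℝ) : ℂ)^2 * z)
        = (-1 + Complex.I) * ((‖z‖ : ℝ) : ℂ)^2 * ((starRingEnd ℂ z) * z) from by ring,
      hcz]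
    ring
  have h5 : (starRingEnd ℂ z) * ((-1 + Complex.I) * ((‖z‖ : ℝ) : ℂ)^4 * z)
      = (-1 + Complex.I) * ((‖z‖ : ℝ) : ℂ)^6 := by
    rw [show (starRingEnd ℂ z) * ((-1 + Complex.I) * ((‖z‖ : ℝ) : ℂ)^4 * z)
        = (-1 + Complex.I) * ((‖z‖ : ℝ) : ℂ)^4 * ((starRingEnd ℂ z) * z) from by ring,
      hcz]
    ring
  have hη : (starRingEnd ℂ z) * ((η:ℂ) * z) = (η:ℂ) * ((‖z‖ : ℝ) : ℂ)^2 := by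
    rw [show (starRingEnd ℂ z) * ((η:ℂ) * z) = (η:ℂ) * ((starRingEnd ℂ z) * z) from by ring, hcz]
  have expand : (starRingEnd ℂ z) * ((Complex.I + (β:ℂ)) * w
        + (-1 + Complex.I) * ((‖z‖ : ℝ) : ℂ)^2 * z
        + (-1 + Complex.I) * ((‖z‖ : ℝ) : ℂ)^4 * z
        + (η:ℂ) * z + Complex.I * (κ:ℂ) * a)
      = (starRingEnd ℂ z) * ((Complex.I + (β:ℂ)) * w)
        + (starRingEnd ℂ z) * ((-1 + Complex.I) * ((‖z‖ : ℝ) : ℂ)^2 * z)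
        + (starRingEnd ℂ z) * ((-1 + Complex.I) * ((‖z‖ : ℝ) : ℂ)^4 * z)
        + (starRingEnd ℂ z) * ((η:ℂ) * z)
        + (starRingEnd ℂ z) * (Complex.I * (κ:ℂ) * a) := by ring
  rw [expand, h3, h5, hη]
  have hc4 : ((‖z‖ : ℝ) : ℂ)^4 = ((‖z‖ ^ 4 : ℝ) : ℂ) := by push_cast; ring
  have hc6 : ((‖z‖ : ℝ) : ℂ)^6 = ((‖z‖ ^ 6 : ℝ) : ℂ) := by push_cast; ring
  have hc2 : ((‖z‖ : ℝ) : ℂ)^2 = ((‖z‖ ^ 2 : ℝ) : ℂ) := by push_cast; ring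
  rw [hc4, hc6, hc2]
  simp only [Complex.add_re, Complex.mul_re, Complex.mul_im, Complex.add_im, Complex.I_re,
    Complex.I_im, Complex.ofReal_re, Complex.ofReal_im, Complex.conj_re, Complex.conj_im,
    Complex.neg_re, Complex.neg_im, Complex.one_re, Complex.one_im]
  have hz2 : ‖z‖ ^ 2 = z.re^2 + z.im^2 := by
    rw [Complex.sq_norm, Complex.normSq_apply]; ring
  have ha2 : ‖a‖ ^ 2 = a.re^2 + a.im^2 := by
    rw [Complex.sq_norm, Complex.normSq_apply]; ring
  have hz4 : ‖z‖ ^ 4 = (z.re^2 + z.im^2)^2 := by rw [show (4:ℕ)=2*2 from rfl, pow_mul, hz2]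
  have hz6 : ‖z‖ ^ 6 = (z.re^2 + z.im^2)^3 := by
    rw [show (6:ℕ)=2*3 from rfl, pow_mul, hz2]
  rw [hz2, ha2, hz4, hz6]
  set d := κ ^ 2 * (a.re ^ 2 + a.im ^ 2) / (β * lam) with hddef
  have hd : d * (β * lam) = κ ^ 2 * (a.re ^ 2 + a.im ^ 2) := div_mul_cancel₀ _ hbl.ne'
  have main : (2*κ*(z.im*a.re - z.re*a.im)) * (β*lam)
      ≤ (β*lam*(z.re^2+z.im^2) + d) * (β*lam) := by
    nlinarith [sq_nonneg (β*lam*z.im - κ*a.re), sq_nonneg (β*lam*z.re + κ*a.im), hd]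
  have main' : 2*κ*(z.im*a.re - z.re*a.im) ≤ β*lam*(z.re^2+z.im^2) + d :=
    le_of_mul_le_mul_right main hbl
  have hdd : κ^2/(β*lam)*(a.re^2+a.im^2) = d := by rw [hddef]; ring
  nlinarith [main', hdd, sq_nonneg (z.re^2+z.im^2),
    mul_nonneg (sq_nonneg (z.re^2+z.im^2)) (add_nonneg (sq_nonneg z.re) (sq_nonneg z.im))]

/-- Uniform-in-time moment bound for classical solutions of the frozen
cubic–quintic Ginzburg–Landau equation: there is `C > 0`, depending only on
`β, η, κ, lam`, such that
`∫₀¹ |u(t)|² ≤ e^{-2αt} ∫₀¹ |u(0)|² + C ∫₀¹ |A|²`. -/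
theorem cqgl_moment_bound
    (β η κ lam : ℝ) (hβ : 0 < β) (hη : 0 < η) (hlam : 0 < lam)
    (hα : 0 < β * lam / 2 - η) (hP : PoincareHyp lam) :
    ∃ C : ℝ, 0 < C ∧
      ∀ (T : ℝ), 0 < T →
      ∀ (A : ℝ → ℂ), ContinuousOn A (Icc (0:ℝ) 1) →
      ∀ (u : ℝ → ℝ → ℂ), IsClassicalSolutionCQGL β η κ T A u →
      ∀ t ∈ Icc (0:ℝ) T,
        ∫ x in (0:ℝ)..1, ‖u t x‖^2
          ≤ Real.exp (-2 * (β * lam / 2 - η) * t) *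
              (∫ x in (0:ℝ)..1, ‖u 0 x‖^2)
            + C * ∫ x in (0:ℝ)..1, ‖A x‖^2 := by
  have hbl : 0 < β * lam := mul_pos hβ hlam
  have h2α : 0 < 2 * (β * lam / 2 - η) := by linarith
  have hden : 0 < β * lam * (2 * (β * lam / 2 - η)) := mul_pos hbl h2α
  refine ⟨κ ^ 2 / (β * lam * (2 * (β * lam / 2 - η))) + 1,
    by have := div_nonneg (sq_nonneg κ) hden.le; linarith, ?_⟩
  intro T hT A hA u hu t ht
  obtain ⟨ut, ux, uxx, hu_c, hut_c, hux_c, huxx_c, hdt, hdx, hdxx, hpde, hbc⟩ := hu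
  -- slice continuity extractors
  have hbox : ∀ {f : ℝ → ℝ → ℂ}, ContinuousOn (fun p : ℝ × ℝ => f p.1 p.2) (Icc 0 T ×ˢ Icc 0 1) →
      ∀ s ∈ Icc (0:ℝ) T, ContinuousOn (fun x => f s x) (Icc (0:ℝ) 1) := by
    intro f hf s hs
    exact hf.comp (continuous_const.prodMk continuous_id).continuousOn fun x hx => ⟨hs, hx⟩
  have hboxT : ∀ {f : ℝ → ℝ → ℂ}, ContinuousOn (fun p : ℝ × ℝ => f p.1 p.2) (Icc 0 T ×ˢ Icc 0 1) →
      ∀ x ∈ Icc (0:ℝ) 1, ContinuousOn (fun s => f s x) (Icc (0:ℝ) T) := by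
    intro f hf x hx
    exact hf.comp (continuous_id.prodMk continuous_const).continuousOn fun s hs => ⟨hs, hx⟩
  obtain ⟨Mu, hMu⟩ := (isCompact_Icc.prod isCompact_Icc).exists_bound_of_continuousOn hu_c
  obtain ⟨Mt, hMt⟩ := (isCompact_Icc.prod isCompact_Icc).exists_bound_of_continuousOn hut_c
  have h00 : ((0:ℝ), (0:ℝ)) ∈ Icc (0:ℝ) T ×ˢ Icc (0:ℝ) 1 :=
    ⟨⟨le_refl 0, hT.le⟩, ⟨le_refl 0, zero_le_one⟩⟩
  have hMu0 : 0 ≤ Mu := le_trans (norm_nonneg _) (hMu _ h00)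
  have hMt0 : 0 ≤ Mt := le_trans (norm_nonneg _) (hMt _ h00)
  have hIoc : Set.uIoc (0:ℝ) 1 = Ioc 0 1 := uIoc_of_le zero_le_one
  have hIcc : Set.uIcc (0:ℝ) 1 = Icc 0 1 := uIcc_of_le zero_le_one
  have hIntR : ∀ {f : ℝ → ℝ}, ContinuousOn f (Icc 0 1) → IntervalIntegrable f volume 0 1 :=
    fun {f} hf => (show ContinuousOn f (Set.uIcc 0 1) from hIcc ▸ hf).intervalIntegrable
  have hIntC : ∀ {f : ℝ → ℂ}, ContinuousOn f (Icc 0 1) → IntervalIntegrable f volume 0 1 :=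
    fun {f} hf => (show ContinuousOn f (Set.uIcc 0 1) from hIcc ▸ hf).intervalIntegrable
  have hmeasR : ∀ {f : ℝ → ℝ}, ContinuousOn f (Icc 0 1) →
      AEStronglyMeasurable f (volume.restrict (Set.uIoc (0:ℝ) 1)) := by
    intro f hf
    rw [hIoc]
    exact (hf.mono Ioc_subset_Icc_self).aestronglyMeasurable measurableSet_Ioc
  have hIA_nonneg : (0:ℝ) ≤ ∫ x in (0:ℝ)..1, ‖A x‖^2 := by
    apply intervalIntegral.integral_nonneg zero_le_one
    intro x _; positivity
  -- continuity of the energy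
  have hEcont : ContinuousOn (fun s => ∫ x in (0:ℝ)..1, ‖u s x‖^2) (Icc 0 T) := by
    intro t₀ ht₀
    apply intervalIntegral.continuousWithinAt_of_dominated_interval (bound := fun _ => Mu ^ 2)
    · exact eventually_nhdsWithin_of_forall fun s hs =>
        hmeasR ((continuous_norm.comp_continuousOn (hbox hu_c s hs)).pow 2)
    · refine eventually_nhdsWithin_of_forall fun s hs => ?_
      refine Filter.Eventually.of_forall fun x hx => ?_
      have hxI : x ∈ Icc (0:ℝ) 1 := Ioc_subset_Icc_self (hIoc ▸ hx)
      have hb := hMu (s, x) ⟨hs, hxI⟩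
      rw [Real.norm_eq_abs, abs_of_nonneg (by positivity)]
      have h0 : (0:ℝ) ≤ ‖u s x‖ := norm_nonneg _
      apply pow_le_pow_left₀ h0
      simpa using hb
    · exact intervalIntegrable_const
    · refine Filter.Eventually.of_forall fun x hx => ?_
      have hxI : x ∈ Icc (0:ℝ) 1 := Ioc_subset_Icc_self (hIoc ▸ hx)
      exact ((continuous_norm.comp_continuousOn (hboxT hu_c x hxI)).pow 2).continuousWithinAt ht₀
  -- derivative of the energy at interior times
  have hEderiv : ∀ t₀ ∈ Ioo (0:ℝ) T,
      HasDerivAt (fun s => ∫ x in (0:ℝ)..1, ‖u s x‖^2)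
        (∫ x in (0:ℝ)..1, 2 * ((starRingEnd ℂ (u t₀ x)) * ut t₀ x).re) t₀ := by
    intro t₀ ht₀
    have hε : 0 < min t₀ (T - t₀) := lt_min ht₀.1 (by linarith [ht₀.2])
    have hball : Metric.ball t₀ (min t₀ (T - t₀)) ⊆ Icc 0 T := by
      intro s hs
      rw [Metric.mem_ball, Real.dist_eq, abs_lt] at hs
      have h1 := min_le_left t₀ (T - t₀)
      have h2 := min_le_right t₀ (T - t₀)
      constructor <;> [linarith [hs.1]; linarith [hs.2]]
    have ht₀I : t₀ ∈ Icc (0:ℝ) T := Ioo_subset_Icc_self ht₀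
    refine (intervalIntegral.hasDerivAt_integral_of_dominated_loc_of_deriv_le (Metric.ball_mem_nhds t₀ hε)
      (F := fun s x => ‖u s x‖^2)
      (F' := fun s x => 2 * ((starRingEnd ℂ (u s x)) * ut s x).re)
      (bound := fun _ => 2 * (Mu * Mt)) ?_ ?_ ?_ ?_ ?_ ?_).2
    · exact Filter.eventually_of_mem (Metric.ball_mem_nhds t₀ hε) fun s hs =>
        hmeasR ((continuous_norm.comp_continuousOn (hbox hu_c s (hball hs))).pow 2)
    · exact hIntR ((continuous_norm.comp_continuousOn (hbox hu_c t₀ ht₀I)).pow 2)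
    · exact hmeasR (continuousOn_const.mul (Complex.continuous_re.comp_continuousOn
        ((Complex.continuous_conj.comp_continuousOn (hbox hu_c t₀ ht₀I)).mul
          (hbox hut_c t₀ ht₀I))))
    · refine Filter.Eventually.of_forall fun x hx s hs => ?_
      show ‖2 * ((starRingEnd ℂ (u s x)) * ut s x).re‖ ≤ 2 * (Mu * Mt)
      have hxI : x ∈ Icc (0:ℝ) 1 := Ioc_subset_Icc_self (hIoc ▸ hx)
      have hsI : s ∈ Icc (0:ℝ) T := hball hs
      have hbu := hMu (s, x) ⟨hsI, hxI⟩
      have hbt := hMt (s, x) ⟨hsI, hxI⟩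
      rw [Real.norm_eq_abs, abs_mul, abs_two]
      have habs : |((starRingEnd ℂ (u s x)) * ut s x).re|
          ≤ ‖u s x‖ * ‖ut s x‖ := by
        calc |((starRingEnd ℂ (u s x)) * ut s x).re|
            ≤ ‖(starRingEnd ℂ (u s x)) * ut s x‖ := Complex.abs_re_le_norm _
          _ = ‖u s x‖ * ‖ut s x‖ := by
              rw [norm_mul, Complex.norm_conj]
      have : ‖u s x‖ * ‖ut s x‖ ≤ Mu * Mt := by
        apply mul_le_mul _ _ (norm_nonneg _) hMu0
        · simpa using hbu
        · simpa using hbt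
      nlinarith
    · exact intervalIntegrable_const
    · refine Filter.Eventually.of_forall fun x hx s hs => ?_
      have hxI : x ∈ Icc (0:ℝ) 1 := Ioc_subset_Icc_self (hIoc ▸ hx)
      exact hasDerivAt_sq_abs (hdt s (hball hs) x hxI)
  -- differential inequality
  have hDle : ∀ s ∈ Ioo (0:ℝ) T,
      (∫ x in (0:ℝ)..1, 2 * ((starRingEnd ℂ (u s x)) * ut s x).re)
        ≤ (2*η - β*lam) * (∫ x in (0:ℝ)..1, ‖u s x‖^2)
          + (κ^2/(β*lam)) * ∫ x in (0:ℝ)..1, ‖A x‖^2 := by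
    intro s hs
    have hsI : s ∈ Icc (0:ℝ) T := Ioo_subset_Icc_self hs
    have hus := hbox hu_c s hsI
    have huts := hbox hut_c s hsI
    have huxs := hbox hux_c s hsI
    have huxxs := hbox huxx_c s hsI
    have hconjus : ContinuousOn (fun x => (starRingEnd ℂ) (u s x)) (Icc 0 1) :=
      Complex.continuous_conj.comp_continuousOn hus
    have hconjuxs : ContinuousOn (fun x => (starRingEnd ℂ) (ux s x)) (Icc 0 1) :=
      Complex.continuous_conj.comp_continuousOn huxs
    -- integration by parts
    have hibp : (∫ x in (0:ℝ)..1, (starRingEnd ℂ) (u s x) * uxx s x)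
        = -(((∫ x in (0:ℝ)..1, ‖ux s x‖^2 : ℝ)) : ℂ) := by
      have hder1 : ∀ x ∈ Ioo (min (0:ℝ) 1) (max (0:ℝ) 1),
          HasDerivAt (fun y => (starRingEnd ℂ) (u s y)) ((starRingEnd ℂ) (ux s x)) x := by
        intro x hx
        rw [min_eq_left zero_le_one, max_eq_right zero_le_one] at hx
        exact hasDerivAt_conj' (hdx s hsI x (Ioo_subset_Icc_self hx))
      have hder2 : ∀ x ∈ Ioo (min (0:ℝ) 1) (max (0:ℝ) 1),
          HasDerivAt (fun y => ux s y) (uxx s x) x := by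
        intro x hx
        rw [min_eq_left zero_le_one, max_eq_right zero_le_one] at hx
        exact hdxx s hsI x (Ioo_subset_Icc_self hx)
      have h1 := intervalIntegral.integral_mul_deriv_eq_deriv_mul_of_hasDerivAt
        (a := (0:ℝ)) (b := 1)
        (u := fun x => (starRingEnd ℂ) (u s x)) (v := fun x => ux s x)
        (u' := fun x => (starRingEnd ℂ) (ux s x)) (v' := fun x => uxx s x)
        (hIcc ▸ hconjus) (hIcc ▸ huxs) hder1 hder2 (hIntC hconjuxs) (hIntC huxxs)
      rw [(hbc s hsI).1, (hbc s hsI).2] at h1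
      simp only [map_zero, zero_mul, mul_zero, sub_zero, zero_sub] at h1
      rw [h1]
      have h2 : ∀ x : ℝ, (starRingEnd ℂ) (ux s x) * ux s x
          = Complex.ofRealCLM (‖ux s x‖^2) := by
        intro x
        rw [conj_mul_self]
        simp only [Complex.ofRealCLM_apply]
        push_cast; ring
      rw [show (∫ x in (0:ℝ)..1, (starRingEnd ℂ) (ux s x) * ux s x)
          = ∫ x in (0:ℝ)..1, Complex.ofRealCLM (‖ux s x‖^2) from by
        simp_rw [h2]]
      have hintx : IntervalIntegrable (fun x => ‖ux s x‖^2) volume 0 1 :=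
        hIntR ((continuous_norm.comp_continuousOn huxs).pow 2)
      rw [Complex.ofRealCLM.intervalIntegral_comp_comm hintx]
      simp
    -- real part of the diffusion term
    have hre_ibp : (∫ x in (0:ℝ)..1,
          2 * ((starRingEnd ℂ (u s x)) * ((Complex.I + (β:ℂ)) * uxx s x)).re)
        = -2*β*(∫ x in (0:ℝ)..1, ‖ux s x‖^2) := by
      have hgint : IntervalIntegrable
          (fun x => (Complex.I + (β:ℂ)) * ((starRingEnd ℂ) (u s x) * uxx s x)) volume 0 1 :=
        hIntC (continuousOn_const.mul (hconjus.mul huxxs))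
      have hcomm := Complex.reCLM.intervalIntegral_comp_comm hgint
      simp only [Complex.reCLM_apply] at hcomm
      calc (∫ x in (0:ℝ)..1,
            2 * ((starRingEnd ℂ (u s x)) * ((Complex.I + (β:ℂ)) * uxx s x)).re)
          = 2 * ∫ x in (0:ℝ)..1,
              ((Complex.I + (β:ℂ)) * ((starRingEnd ℂ) (u s x) * uxx s x)).re := by
            rw [← intervalIntegral.integral_const_mul]
            apply intervalIntegral.integral_congr
            intro x _
            ring_nf
        _ = 2 * ((Complex.I + (β:ℂ)) * ∫ x in (0:ℝ)..1,
              (starRingEnd ℂ) (u s x) * uxx s x).re := by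
            rw [hcomm, intervalIntegral.integral_const_mul]
        _ = -2*β*(∫ x in (0:ℝ)..1, ‖ux s x‖^2) := by
            rw [hibp]
            simp [Complex.mul_re, Complex.add_re, Complex.add_im]
            ring
    -- Poincaré
    have hPoin : lam * (∫ x in (0:ℝ)..1, ‖u s x‖^2)
        ≤ ∫ x in (0:ℝ)..1, ‖ux s x‖^2 :=
      hP (fun x => u s x) (fun x => ux s x) (fun x hx => hdx s hsI x hx) huxs
        (hbc s hsI).1 (hbc s hsI).2
    -- pointwise inequality on [0,1]
    have hpt : ∀ x ∈ Icc (0:ℝ) 1,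
        2 * ((starRingEnd ℂ (u s x)) * ut s x).re
          ≤ 2 * ((starRingEnd ℂ (u s x)) * ((Complex.I + (β:ℂ)) * uxx s x)).re
            + (2*η + β*lam) * ‖u s x‖^2
            + (κ^2/(β*lam)) * ‖A x‖^2 := by
      intro x hx
      by_cases hxi : x ∈ Ioo (0:ℝ) 1
      · rw [hpde s hs x hxi]
        exact cqgl_key β η κ lam hβ hlam (u s x) (uxx s x) (A x)
      · have hx01 : u s x = 0 := by
          have : x = 0 ∨ x = 1 := by
            rcases lt_or_ge 0 x with h | h
            · right
              rcases lt_or_ge x 1 with h' | h'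
              · exact absurd ⟨h, h'⟩ hxi
              · linarith [hx.2]
            · left; linarith [hx.1]
          rcases this with rfl | rfl
          · exact (hbc s hsI).1
          · exact (hbc s hsI).2
        rw [hx01]
        simp only [map_zero, zero_mul, Complex.zero_re, mul_zero, map_zero]
        have h1 : (0:ℝ) ≤ (2*η + β*lam) * ‖(0:ℂ)‖^2 := by positivity
        have h2 : (0:ℝ) ≤ (κ^2/(β*lam)) * ‖A x‖^2 := by positivity
        linarith
    have hc1 : ContinuousOn (fun x => 2 * ((starRingEnd ℂ (u s x)) * ut s x).re) (Icc 0 1) :=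
      continuousOn_const.mul (Complex.continuous_re.comp_continuousOn (hconjus.mul huts))
    have hc2a : ContinuousOn (fun x =>
        2 * ((starRingEnd ℂ (u s x)) * ((Complex.I + (β:ℂ)) * uxx s x)).re) (Icc 0 1) :=
      continuousOn_const.mul (Complex.continuous_re.comp_continuousOn
        (hconjus.mul (continuousOn_const.mul huxxs)))
    have hc2b : ContinuousOn (fun x => (2*η + β*lam) * ‖u s x‖^2) (Icc 0 1) :=
      continuousOn_const.mul ((continuous_norm.comp_continuousOn hus).pow 2)
    have hc2c : ContinuousOn (fun x => (κ^2/(β*lam)) * ‖A x‖^2) (Icc 0 1) :=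
      continuousOn_const.mul ((continuous_norm.comp_continuousOn hA).pow 2)
    have i1 : IntervalIntegrable (fun x =>
        2 * ((starRingEnd ℂ (u s x)) * ((Complex.I + (β:ℂ)) * uxx s x)).re) volume 0 1 :=
      hIntR hc2a
    have i2 : IntervalIntegrable (fun x => (2*η + β*lam) * ‖u s x‖^2) volume 0 1 :=
      hIntR hc2b
    have i3 : IntervalIntegrable (fun x => (κ^2/(β*lam)) * ‖A x‖^2) volume 0 1 :=
      hIntR hc2c
    have hmono := intervalIntegral.integral_mono_on zero_le_one (hIntR hc1)
      ((i1.add i2).add i3) hpt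
    have hsplit : (∫ x in (0:ℝ)..1,
        (2 * ((starRingEnd ℂ (u s x)) * ((Complex.I + (β:ℂ)) * uxx s x)).re
          + (2*η + β*lam) * ‖u s x‖^2
          + (κ^2/(β*lam)) * ‖A x‖^2))
        = (∫ x in (0:ℝ)..1,
            2 * ((starRingEnd ℂ (u s x)) * ((Complex.I + (β:ℂ)) * uxx s x)).re)
          + (2*η + β*lam) * (∫ x in (0:ℝ)..1, ‖u s x‖^2)
          + (κ^2/(β*lam)) * ∫ x in (0:ℝ)..1, ‖A x‖^2 := by
      rw [intervalIntegral.integral_add (i1.add i2) i3, intervalIntegral.integral_add i1 i2,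
        intervalIntegral.integral_const_mul (2*η + β*lam),
        intervalIntegral.integral_const_mul (κ^2/(β*lam))]
    rw [hsplit, hre_ibp] at hmono
    have hβP : -2*β*(∫ x in (0:ℝ)..1, ‖ux s x‖^2)
        ≤ -2*β*(lam * (∫ x in (0:ℝ)..1, ‖u s x‖^2)) := by
      have h2β : (0:ℝ) < 2*β := by linarith
      nlinarith [hPoin]
    linarith
  -- Grönwall argument
  set α : ℝ := β * lam / 2 - η with hαdef
  set K : ℝ := (κ^2/(β*lam)) * ∫ x in (0:ℝ)..1, ‖A x‖^2 with hKdef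
  have hK0 : 0 ≤ K := mul_nonneg (div_nonneg (sq_nonneg κ) hbl.le) hIA_nonneg
  set c : ℝ := K / (2*α) with hcdef
  have hc0 : 0 ≤ c := div_nonneg hK0 (by linarith)
  set h : ℝ → ℝ := fun s => Real.exp (2*α*s) *
    ((∫ x in (0:ℝ)..1, ‖u s x‖^2) - c) with hhdef
  have hhder : ∀ s ∈ Ioo (0:ℝ) T, HasDerivAt h
      (2*α * Real.exp (2*α*s) * ((∫ x in (0:ℝ)..1, ‖u s x‖^2) - c)
        + Real.exp (2*α*s) * (∫ x in (0:ℝ)..1, 2 * ((starRingEnd ℂ (u s x)) * ut s x).re)) s := by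
    intro s hs
    have hexp : HasDerivAt (fun τ => Real.exp (2*α*τ)) (2*α * Real.exp (2*α*s)) s := by
      have := ((hasDerivAt_id s).const_mul (2*α)).exp
      simpa [mul_comm] using this
    exact hexp.mul ((hEderiv s hs).sub_const c)
  have hhcont : ContinuousOn h (Icc 0 T) := by
    apply ContinuousOn.mul
    · exact (Real.continuous_exp.comp (continuous_const.mul continuous_id)).continuousOn
    · exact hEcont.sub continuousOn_const
  have hanti : AntitoneOn h (Icc 0 T) := by
    apply antitoneOn_of_deriv_nonpos (convex_Icc 0 T) hhcont
    · intro s hs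
      rw [interior_Icc] at hs
      exact ((hhder s hs).differentiableAt).differentiableWithinAt
    · intro s hs
      rw [interior_Icc] at hs
      rw [(hhder s hs).deriv]
      have hDs := hDle s hs
      have hKα : 2*α*c = K := by
        rw [hcdef]
        field_simp
      have hexp0 : (0:ℝ) < Real.exp (2*α*s) := Real.exp_pos _
      have hfac : 2*α * ((∫ x in (0:ℝ)..1, ‖u s x‖^2) - c)
          + (∫ x in (0:ℝ)..1, 2 * ((starRingEnd ℂ (u s x)) * ut s x).re) ≤ 0 := by
        have h2αval : (2:ℝ)*α = -(2*η - β*lam) := by rw [hαdef]; ring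
        have heq : 2*α * ((∫ x in (0:ℝ)..1, ‖u s x‖^2) - c)
            = -(2*η - β*lam) * (∫ x in (0:ℝ)..1, ‖u s x‖^2) - K := by
          rw [← hKα]
          linear_combination ((∫ x in (0:ℝ)..1, ‖u s x‖^2) - c) * h2αval
        linarith [hDs, heq]
      nlinarith [hfac, hexp0]
  have h0mem : (0:ℝ) ∈ Icc (0:ℝ) T := ⟨le_refl 0, hT.le⟩
  have hmono := hanti h0mem ht ht.1
  rw [hhdef] at hmono
  simp only [mul_zero, Real.exp_zero, one_mul] at hmono
  -- unfold and finish
  have hexp_pos : (0:ℝ) < Real.exp (2*α*t) := Real.exp_pos _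
  have hexp_inv : Real.exp (-2 * α * t) = (Real.exp (2*α*t))⁻¹ := by
    rw [← Real.exp_neg]
    congr 1
    ring
  have hEt : (∫ x in (0:ℝ)..1, ‖u t x‖^2)
      ≤ (Real.exp (2*α*t))⁻¹ * ((∫ x in (0:ℝ)..1, ‖u 0 x‖^2) - c) + c := by
    have := mul_le_mul_of_nonneg_left hmono (le_of_lt (inv_pos.mpr hexp_pos))
    rw [← mul_assoc, inv_mul_cancel₀ hexp_pos.ne', one_mul] at this
    linarith
  rw [hexp_inv]
  have hc_eq : c = κ ^ 2 / (β * lam * (2 * α)) *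
      (∫ x in (0:ℝ)..1, ‖A x‖^2) := by
    rw [hcdef, hKdef]
    field_simp
  have hinvc : 0 ≤ (Real.exp (2*α*t))⁻¹ * c :=
    mul_nonneg (inv_pos.mpr hexp_pos).le hc0
  have hexpand : (Real.exp (2*α*t))⁻¹ * ((∫ x in (0:ℝ)..1, ‖u 0 x‖^2) - c)
      = (Real.exp (2*α*t))⁻¹ * (∫ x in (0:ℝ)..1, ‖u 0 x‖^2)
        - (Real.exp (2*α*t))⁻¹ * c := by ring
  rw [hexpand] at hEt
  have hCIA : c ≤ (κ ^ 2 / (β * lam * (2 * α)) + 1) *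
      (∫ x in (0:ℝ)..1, ‖A x‖^2) := by
    rw [hc_eq, add_mul, one_mul]
    exact le_add_of_nonneg_right hIA_nonneg
  linarith
end

section
/- Let β > 0, η > 0, λ > 0, T > 0 and set α := βλ/2 − η; assume α > 0 and assume the Poincaré hypothesis with constant λ. Let g₁, g₂ : [0,T]×[0,1] → ℂ be continuous, and let u (respectively v) be a classical solution on [0,T] of ∂_t u(t,x) = (i+β)∂²_x u(t,x) + 𝓕(u(t,x)) + 𝓖(u(t,x)) + η u(t,x) + g₁(t,x) (respectively with forcing g₂) on (0,T)×(0,1), with homogeneous Dirichlet boundary conditions. Then for every t ∈ [0,T], ‖u(t,·) − v(t,·)‖ ≤ e^{−αt} ‖u(0,·) − v(0,·)‖ + ∫₀ᵗ e^{−α(t−s)} ‖g₁(s,·) − g₂(s,·)‖ ds, where ‖w‖ := (∫₀¹ |w(x)|² dx)^{1/2}. -/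
open Set MeasureTheory

/-- Classical solution on `[0,T] × [0,1]` of
`∂_t u = (i+β)∂²_x u + 𝓕(u) + 𝓖(u) + η u + g(t,x)` with homogeneous Dirichlet
boundary conditions. -/
def IsClassicalSolutionForcedCQGL (β η T : ℝ) (g : ℝ → ℝ → ℂ)
    (u : ℝ → ℝ → ℂ) : Prop :=
  ∃ ut ux uxx : ℝ → ℝ → ℂ,
    ContinuousOn (fun p : ℝ × ℝ => u p.1 p.2) (Icc 0 T ×ˢ Icc 0 1) ∧
    ContinuousOn (fun p : ℝ × ℝ => ut p.1 p.2) (Icc 0 T ×ˢ Icc 0 1) ∧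
    ContinuousOn (fun p : ℝ × ℝ => ux p.1 p.2) (Icc 0 T ×ˢ Icc 0 1) ∧
    ContinuousOn (fun p : ℝ × ℝ => uxx p.1 p.2) (Icc 0 T ×ˢ Icc 0 1) ∧
    (∀ t ∈ Icc (0:ℝ) T, ∀ x ∈ Icc (0:ℝ) 1,
      HasDerivAt (fun τ => u τ x) (ut t x) t) ∧
    (∀ t ∈ Icc (0:ℝ) T, ∀ x ∈ Icc (0:ℝ) 1,
      HasDerivAt (fun ξ => u t ξ) (ux t x) x) ∧
    (∀ t ∈ Icc (0:ℝ) T, ∀ x ∈ Icc (0:ℝ) 1,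
      HasDerivAt (fun ξ => ux t ξ) (uxx t x) x) ∧
    (∀ t ∈ Ioo (0:ℝ) T, ∀ x ∈ Ioo (0:ℝ) 1,
      ut t x = (Complex.I + (β : ℂ)) * uxx t x
        + cubicGL (u t x) + quinticGL (u t x)
        + (η : ℂ) * u t x + g t x) ∧
    (∀ t ∈ Icc (0:ℝ) T, u t 0 = 0 ∧ u t 1 = 0)


section AuxiliaryLemmas

open intervalIntegral Filter Topology ComplexConjugate Interval

lemma sq_le_imp_le {S C : ℝ} (hC : 0 ≤ C) (h : S^2 ≤ C^2) : S ≤ C := by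
  calc S ≤ |S| := le_abs_self S
  _ = Real.sqrt (S^2) := by rw [Real.sqrt_sq_eq_abs]
  _ ≤ Real.sqrt (C^2) := Real.sqrt_le_sqrt h
  _ = C := by rw [Real.sqrt_sq hC]

lemma key_real3 (A B p q : ℝ) (hA : 0 ≤ A) (hB : 0 ≤ B) (hpq : p^2 + q^2 = A*B) :
    (A+B)*p + (A-B)*q ≤ A^2 + B^2 := by
  refine sq_le_imp_le (by positivity) ?_
  have h1 : ((A+B)*p + (A-B)*q)^2 = 2*A*B*(A^2+B^2) - ((A+B)*q - (A-B)*p)^2 := by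
    linear_combination (2*A^2+2*B^2) * hpq
  have h2 : 2*A*B*(A^2+B^2) ≤ (A^2+B^2)^2 := by
    nlinarith [mul_nonneg (sq_nonneg (A-B)) (by positivity : (0:ℝ) ≤ A^2+B^2)]
  nlinarith [sq_nonneg ((A+B)*q - (A-B)*p)]

lemma key_real5 (A B p q : ℝ) (hA : 0 ≤ A) (hB : 0 ≤ B) (hpq : p^2 + q^2 = A*B) :
    (A^2+B^2)*p + (A^2-B^2)*q ≤ A^3 + B^3 := by
  refine sq_le_imp_le (by positivity) ?_
  have h1 : ((A^2+B^2)*p + (A^2-B^2)*q)^2 = 2*A*B*(A^4+B^4) - ((A^2+B^2)*q - (A^2-B^2)*p)^2 := by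
    linear_combination (2*A^4+2*B^4) * hpq
  have h2 : 2*A*B*(A^4+B^4) ≤ (A^3+B^3)^2 := by
    nlinarith [mul_nonneg (sq_nonneg (A-B)) (by nlinarith [sq_nonneg (A^2 - B^2), sq_nonneg (A*B)] : (0:ℝ) ≤ A^4 - A^2*B^2 + B^4)]
  nlinarith [sq_nonneg ((A^2+B^2)*q - (A^2-B^2)*p)]

lemma abs_mul_conj (a b : ℂ) :
    (a * (starRingEnd ℂ) b).re^2 + (a * (starRingEnd ℂ) b).im^2
      = ‖a‖^2 * ‖b‖^2 := by
  have : ‖a‖^2 * ‖b‖^2 = Complex.normSq (a * (starRingEnd ℂ) b) := by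
    simp [Complex.normSq_mul, Complex.sq_norm, Complex.normSq_conj]
  rw [this, Complex.normSq_apply]; ring

lemma cubic_dissip (a b : ℂ) :
    ((cubicGL a - cubicGL b) * (starRingEnd ℂ) (a - b)).re ≤ 0 := by
  have h3 := key_real3 (‖a‖^2) (‖b‖^2)
    ((a * (starRingEnd ℂ) b).re) ((a * (starRingEnd ℂ) b).im)
    (by positivity) (by positivity) (abs_mul_conj a b)
  have he : ((cubicGL a - cubicGL b) * (starRingEnd ℂ) (a - b)).re
      = ((‖a‖^2 + ‖b‖^2)*((a * (starRingEnd ℂ) b).re)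
        + (‖a‖^2 - ‖b‖^2)*((a * (starRingEnd ℂ) b).im))
        - ((‖a‖^2)^2 + (‖b‖^2)^2) := by
    simp [cubicGL, Complex.mul_re, Complex.mul_im, Complex.sub_re, Complex.sub_im,
      ← Complex.ofReal_pow, Complex.ofReal_re, Complex.ofReal_im,
      Complex.sq_norm, Complex.normSq_apply]
    ring
  rw [he]; nlinarith [h3]

lemma quintic_dissip (a b : ℂ) :
    ((quinticGL a - quinticGL b) * (starRingEnd ℂ) (a - b)).re ≤ 0 := by
  have h5 := key_real5 (‖a‖^2) (‖b‖^2)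
    ((a * (starRingEnd ℂ) b).re) ((a * (starRingEnd ℂ) b).im)
    (by positivity) (by positivity) (abs_mul_conj a b)
  have he : ((quinticGL a - quinticGL b) * (starRingEnd ℂ) (a - b)).re
      = (((‖a‖^2)^2 + (‖b‖^2)^2)*((a * (starRingEnd ℂ) b).re)
        + ((‖a‖^2)^2 - (‖b‖^2)^2)*((a * (starRingEnd ℂ) b).im))
        - ((‖a‖^2)^3 + (‖b‖^2)^3) := by
    have h4 : ∀ z : ℂ, ((‖z‖ : ℝ) : ℂ)^4 = ((‖z‖^2 : ℝ) : ℂ)^2 := by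
      intro z; push_cast; ring
    simp [quinticGL, h4, Complex.mul_re, Complex.mul_im, Complex.sub_re, Complex.sub_im,
      ← Complex.ofReal_pow, ← Complex.ofReal_mul, ← Complex.ofReal_add, ← Complex.ofReal_ofNat,
      Complex.ofReal_re, Complex.ofReal_im,
      Complex.sq_norm, Complex.normSq_apply]
    ring
  rw [he]; nlinarith [h5]

lemma hasDerivAt_cre {f : ℝ → ℂ} {f' : ℂ} {t : ℝ} (h : HasDerivAt f f' t) :
    HasDerivAt (fun τ => (f τ).re) f'.re t := by
  exact (Complex.reCLM.hasFDerivAt.comp_hasDerivAt t h)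

lemma hasDerivAt_cconj {f : ℝ → ℂ} {f' : ℂ} {t : ℝ} (h : HasDerivAt f f' t) :
    HasDerivAt (fun τ => (starRingEnd ℂ) (f τ)) ((starRingEnd ℂ) f') t := by
  have := (Complex.conjCLE.toContinuousLinearMap.hasFDerivAt.comp_hasDerivAt t h)
  exact this

-- slice continuity helper
lemma slice_cont {a b : ℝ} {γ : Type*} [TopologicalSpace γ] {f : ℝ → ℝ → γ} {s : ℝ}
    (hf : ContinuousOn (fun p : ℝ × ℝ => f p.1 p.2) (Icc a b ×ˢ Icc 0 1))
    (hs : s ∈ Icc a b) : ContinuousOn (f s) (Icc (0:ℝ) 1) := by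
  have : ContinuousOn (fun x : ℝ => (s, x)) (Icc (0:ℝ) 1) :=
    (continuous_const.prodMk continuous_id).continuousOn
  exact hf.comp this (fun x hx => ⟨hs, hx⟩)

lemma contOn_paramIntegral {a b : ℝ} {f : ℝ → ℝ → ℝ}
    (hf : ContinuousOn (fun p : ℝ × ℝ => f p.1 p.2) (Icc a b ×ˢ Icc 0 1)) :
    ContinuousOn (fun t => ∫ x in (0:ℝ)..1, f t x) (Icc a b) := by
  obtain ⟨C, hC⟩ := (isCompact_Icc.prod isCompact_Icc).exists_bound_of_continuousOn hf
  intro t ht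
  refine intervalIntegral.tendsto_integral_filter_of_dominated_convergence (fun _ => C) ?_ ?_ ?_ ?_
  · filter_upwards [self_mem_nhdsWithin] with s hs
    exact ((slice_cont hf hs).mono (by rw [uIoc_of_le zero_le_one]; exact Ioc_subset_Icc_self)
      ).aestronglyMeasurable measurableSet_uIoc
  · filter_upwards [self_mem_nhdsWithin] with s hs
    refine ae_of_all _ (fun x hx => ?_)
    have hx' : x ∈ Icc (0:ℝ) 1 := by
      rw [uIoc_of_le zero_le_one] at hx; exact Ioc_subset_Icc_self hx
    exact hC (s, x) ⟨hs, hx'⟩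
  · exact intervalIntegrable_const
  · refine ae_of_all _ (fun x hx => ?_)
    have hx' : x ∈ Icc (0:ℝ) 1 := by
      rw [uIoc_of_le zero_le_one] at hx; exact Ioc_subset_Icc_self hx
    have h1 : Tendsto (fun s : ℝ => (s, x)) (𝓝[Icc a b] t) (𝓝[Icc a b ×ˢ Icc 0 1] (t, x)) := by
      rw [tendsto_nhdsWithin_iff]
      constructor
      · exact ((continuous_id.prodMk continuous_const).tendsto t).mono_left nhdsWithin_le_nhds
      · filter_upwards [self_mem_nhdsWithin] with s hs
        exact ⟨hs, hx'⟩
    exact (hf.continuousWithinAt ⟨ht, hx'⟩).tendsto.comp h1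

lemma hasDerivAt_paramIntegral {T : ℝ} {F F' : ℝ → ℝ → ℝ}
    (hF' : ContinuousOn (fun p : ℝ × ℝ => F' p.1 p.2) (Icc 0 T ×ˢ Icc 0 1))
    (hFc : ∀ t ∈ Icc (0:ℝ) T, ContinuousOn (F t) (Icc (0:ℝ) 1))
    (hd : ∀ t ∈ Icc (0:ℝ) T, ∀ x ∈ Icc (0:ℝ) 1, HasDerivAt (fun τ => F τ x) (F' t x) t)
    {t₀ : ℝ} (ht₀ : t₀ ∈ Ioo (0:ℝ) T) :
    HasDerivAt (fun t => ∫ x in (0:ℝ)..1, F t x) (∫ x in (0:ℝ)..1, F' t₀ x) t₀ := by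
  obtain ⟨C, hC⟩ := (isCompact_Icc.prod isCompact_Icc).exists_bound_of_continuousOn hF'
  have hball : Metric.ball t₀ (min t₀ (T - t₀)) ⊆ Icc 0 T := by
    intro τ hτ
    rw [Metric.mem_ball, Real.dist_eq, abs_lt] at hτ
    constructor <;> [linarith [min_le_left t₀ (T - t₀), hτ.1]; skip]
    linarith [min_le_right t₀ (T - t₀), hτ.2]
  have hsub : ∀ x ∈ Ι (0:ℝ) 1, x ∈ Icc (0:ℝ) 1 := by
    intro x hx; rw [uIoc_of_le zero_le_one] at hx; exact Ioc_subset_Icc_self hx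
  have εpos : 0 < min t₀ (T - t₀) := lt_min ht₀.1 (by linarith [ht₀.2])
  have ht₀' : t₀ ∈ Icc (0:ℝ) T := ⟨ht₀.1.le, ht₀.2.le⟩
  refine (intervalIntegral.hasDerivAt_integral_of_dominated_loc_of_deriv_le (bound := fun _ => C) (Metric.ball_mem_nhds t₀ εpos) ?_ ?_ ?_ ?_ ?_ ?_).2
  · filter_upwards [Icc_mem_nhds ht₀.1 ht₀.2] with s hs
    exact (((hFc s hs).mono fun x hx => hsub x hx)).aestronglyMeasurable measurableSet_uIoc
  · exact (hFc t₀ ht₀').intervalIntegrable_of_Icc zero_le_one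
  · exact ((slice_cont hF' ht₀').mono fun x hx => hsub x hx).aestronglyMeasurable measurableSet_uIoc
  · refine ae_of_all _ (fun x hx τ hτ => hC (τ, x) ⟨hball hτ, hsub x hx⟩)
  · exact intervalIntegrable_const
  · exact ae_of_all _ (fun x hx τ hτ => hd τ (hball hτ) x (hsub x hx))

lemma CS01 {f g : ℝ → ℝ} (hf : ContinuousOn f (Icc 0 1)) (hg : ContinuousOn g (Icc 0 1)) :
    ∫ x in (0:ℝ)..1, f x * g x
      ≤ Real.sqrt (∫ x in (0:ℝ)..1, f x ^ 2) * Real.sqrt (∫ x in (0:ℝ)..1, g x ^ 2) := by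
  have h01 : (Icc (0:ℝ) 1) = uIcc (0:ℝ) 1 := (uIcc_of_le zero_le_one).symm
  rw [h01] at hf hg
  have hf2 : IntervalIntegrable (fun x => f x ^ 2) volume 0 1 := (hf.pow 2).intervalIntegrable
  have hg2 : IntervalIntegrable (fun x => g x ^ 2) volume 0 1 := (hg.pow 2).intervalIntegrable
  have hfg : IntervalIntegrable (fun x => f x * g x) volume 0 1 := (hf.mul hg).intervalIntegrable
  set F := ∫ x in (0:ℝ)..1, f x ^ 2 with hF
  set G := ∫ x in (0:ℝ)..1, g x ^ 2 with hG
  set Ifg := ∫ x in (0:ℝ)..1, f x * g x with hI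
  have hFnn : 0 ≤ F := intervalIntegral.integral_nonneg zero_le_one (fun x _ => sq_nonneg _)
  have hGnn : 0 ≤ G := intervalIntegral.integral_nonneg zero_le_one (fun x _ => sq_nonneg _)
  have key : ∀ τ : ℝ, 0 ≤ F * (τ * τ) + (-2 * Ifg) * τ + G := by
    intro τ
    have h0 : 0 ≤ ∫ x in (0:ℝ)..1, (τ * f x - g x) ^ 2 :=
      intervalIntegral.integral_nonneg zero_le_one (fun x _ => sq_nonneg _)
    have hexp : (∫ x in (0:ℝ)..1, (τ * f x - g x) ^ 2)
        = τ^2 * F + (-2*τ) * Ifg + G := by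
      have : (fun x => (τ * f x - g x) ^ 2)
          = fun x => τ^2 * f x ^ 2 + (-2*τ) * (f x * g x) + g x ^ 2 := by
        funext x; ring
      rw [this]
      rw [intervalIntegral.integral_add ((hf2.const_mul _).add (hfg.const_mul _)) hg2,
        intervalIntegral.integral_add (hf2.const_mul _) (hfg.const_mul _),
        intervalIntegral.integral_const_mul, intervalIntegral.integral_const_mul]
    nlinarith [h0, hexp]
  have hdisc : discrim F (-2*Ifg) G ≤ 0 := discrim_le_zero key
  rw [discrim] at hdisc
  have hIsq : Ifg ^ 2 ≤ F * G := by nlinarith [hdisc]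
  calc Ifg ≤ |Ifg| := le_abs_self Ifg
  _ = Real.sqrt (Ifg^2) := by rw [Real.sqrt_sq_eq_abs]
  _ ≤ Real.sqrt (F * G) := Real.sqrt_le_sqrt hIsq
  _ = Real.sqrt F * Real.sqrt G := Real.sqrt_mul hFnn G

lemma cont_cubicGL : Continuous cubicGL := by
  unfold cubicGL
  exact (continuous_const.mul ((Complex.continuous_ofReal.comp continuous_norm).pow 2)).mul continuous_id

lemma cont_quinticGL : Continuous quinticGL := by
  unfold quinticGL
  exact (continuous_const.mul ((Complex.continuous_ofReal.comp continuous_norm).pow 4)).mul continuous_id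

lemma intervalIntegral_re {f : ℝ → ℂ} (hf : IntervalIntegrable f volume 0 1) :
    (∫ x in (0:ℝ)..1, f x).re = ∫ x in (0:ℝ)..1, (f x).re := by
  rw [intervalIntegral.integral_of_le zero_le_one, intervalIntegral.integral_of_le zero_le_one]
  exact (integral_re ((intervalIntegrable_iff_integrableOn_Ioc_of_le zero_le_one).mp hf)).symm

lemma slice_D_bound
    {β η lam : ℝ} (hβ : 0 < β) (hη : 0 < η) (hlam : 0 < lam)
    (hP : PoincareHyp lam)
    (W Wt Wx Wxx Gd a b : ℝ → ℂ)
    (hW : ∀ x, W x = a x - b x)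
    (haC : ContinuousOn a (Icc 0 1)) (hbC : ContinuousOn b (Icc 0 1))
    (hWtC : ContinuousOn Wt (Icc 0 1)) (hWxC : ContinuousOn Wx (Icc 0 1))
    (hWxxC : ContinuousOn Wxx (Icc 0 1)) (hGdC : ContinuousOn Gd (Icc 0 1))
    (hdx : ∀ x ∈ Icc (0:ℝ) 1, HasDerivAt W (Wx x) x)
    (hdxx : ∀ x ∈ Icc (0:ℝ) 1, HasDerivAt Wx (Wxx x) x)
    (hbc0 : W 0 = 0) (hbc1 : W 1 = 0)
    (hpde : ∀ x ∈ Ioo (0:ℝ) 1, Wt x = (Complex.I + (β:ℂ)) * Wxx x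
      + (cubicGL (a x) - cubicGL (b x)) + (quinticGL (a x) - quinticGL (b x))
      + (η:ℂ) * W x + Gd x) :
    ∫ x in (0:ℝ)..1, 2 * (Wt x * conj (W x)).re
      ≤ -2*(β*lam/2 - η) * (∫ x in (0:ℝ)..1, ‖W x‖^2)
        + 2 * Real.sqrt (∫ x in (0:ℝ)..1, ‖Gd x‖^2)
            * Real.sqrt (∫ x in (0:ℝ)..1, ‖W x‖^2) := by
  have hWC : ContinuousOn W (Icc (0:ℝ) 1) := (haC.sub hbC).congr (fun x _ => hW x)
  have hconjW : ContinuousOn (fun x => conj (W x)) (Icc (0:ℝ) 1) :=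
    Complex.continuous_conj.comp_continuousOn hWC
  set E := ∫ x in (0:ℝ)..1, ‖W x‖^2 with hE
  set r := ∫ x in (0:ℝ)..1, ‖Wx x‖^2 with hr
  set dl := Real.sqrt (∫ x in (0:ℝ)..1, ‖Gd x‖^2) with hdl
  set S := Real.sqrt E with hS
  have hEnn : 0 ≤ E := intervalIntegral.integral_nonneg zero_le_one (fun x _ => by positivity)
  -- the five pieces
  set f1 : ℝ → ℝ := fun x => 2 * (((Complex.I + (β:ℂ)) * Wxx x) * conj (W x)).re with hf1def
  set f2 : ℝ → ℝ := fun x => 2 * ((cubicGL (a x) - cubicGL (b x)) * conj (W x)).re with hf2def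
  set f3 : ℝ → ℝ := fun x => 2 * ((quinticGL (a x) - quinticGL (b x)) * conj (W x)).re with hf3def
  set f4 : ℝ → ℝ := fun x => 2 * (((η:ℂ) * W x) * conj (W x)).re with hf4def
  set f5 : ℝ → ℝ := fun x => 2 * (Gd x * conj (W x)).re with hf5def
  have hf1C : ContinuousOn f1 (Icc (0:ℝ) 1) := by
    rw [hf1def]
    exact continuousOn_const.mul (Complex.continuous_re.comp_continuousOn
      ((continuousOn_const.mul hWxxC).mul hconjW))
  have hf2C : ContinuousOn f2 (Icc (0:ℝ) 1) := by
    rw [hf2def]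
    exact continuousOn_const.mul (Complex.continuous_re.comp_continuousOn
      (((cont_cubicGL.comp_continuousOn haC).sub (cont_cubicGL.comp_continuousOn hbC)).mul hconjW))
  have hf3C : ContinuousOn f3 (Icc (0:ℝ) 1) := by
    rw [hf3def]
    exact continuousOn_const.mul (Complex.continuous_re.comp_continuousOn
      (((cont_quinticGL.comp_continuousOn haC).sub (cont_quinticGL.comp_continuousOn hbC)).mul hconjW))
  have hf4C : ContinuousOn f4 (Icc (0:ℝ) 1) := by
    rw [hf4def]
    exact continuousOn_const.mul (Complex.continuous_re.comp_continuousOn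
      ((continuousOn_const.mul hWC).mul hconjW))
  have hf5C : ContinuousOn f5 (Icc (0:ℝ) 1) := by
    rw [hf5def]
    exact continuousOn_const.mul (Complex.continuous_re.comp_continuousOn (hGdC.mul hconjW))
  have hf1I : IntervalIntegrable f1 volume 0 1 := hf1C.intervalIntegrable_of_Icc zero_le_one
  have hf2I : IntervalIntegrable f2 volume 0 1 := hf2C.intervalIntegrable_of_Icc zero_le_one
  have hf3I : IntervalIntegrable f3 volume 0 1 := hf3C.intervalIntegrable_of_Icc zero_le_one
  have hf4I : IntervalIntegrable f4 volume 0 1 := hf4C.intervalIntegrable_of_Icc zero_le_one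
  have hf5I : IntervalIntegrable f5 volume 0 1 := hf5C.intervalIntegrable_of_Icc zero_le_one
  -- split integral by the PDE
  have hsplit : ∫ x in (0:ℝ)..1, 2 * (Wt x * conj (W x)).re
      = (∫ x in (0:ℝ)..1, f1 x) + (∫ x in (0:ℝ)..1, f2 x) + (∫ x in (0:ℝ)..1, f3 x)
        + (∫ x in (0:ℝ)..1, f4 x) + (∫ x in (0:ℝ)..1, f5 x) := by
    have h1ae : ∀ᵐ x : ℝ ∂volume, x ≠ (1:ℝ) := by
      refine ae_iff.mpr ?_
      simpa using measure_singleton (1:ℝ)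
    have hae : ∀ᵐ x : ℝ ∂volume, x ∈ Ι (0:ℝ) 1 →
        2 * (Wt x * conj (W x)).re = f1 x + f2 x + f3 x + f4 x + f5 x := by
      filter_upwards [h1ae] with x hx1 hxI
      rw [uIoc_of_le zero_le_one] at hxI
      have hxo : x ∈ Ioo (0:ℝ) 1 := ⟨hxI.1, lt_of_le_of_ne hxI.2 hx1⟩
      rw [hpde x hxo, hf1def, hf2def, hf3def, hf4def, hf5def]
      simp only [add_mul, Complex.add_re]
      ring
    rw [intervalIntegral.integral_congr_ae hae,
      intervalIntegral.integral_add ((((hf1I.add hf2I).add hf3I).add hf4I)) hf5I,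
      intervalIntegral.integral_add (((hf1I.add hf2I).add hf3I)) hf4I,
      intervalIntegral.integral_add ((hf1I.add hf2I)) hf3I,
      intervalIntegral.integral_add hf1I hf2I]
  -- term 1 : integration by parts + Poincaré
  have hconjWxI : IntervalIntegrable (fun x => conj (Wx x)) volume 0 1 :=
    (Complex.continuous_conj.comp_continuousOn hWxC).intervalIntegrable_of_Icc zero_le_one
  have hWxxI : IntervalIntegrable Wxx volume 0 1 := hWxxC.intervalIntegrable_of_Icc zero_le_one
  have hIBP : ∫ x in (0:ℝ)..1, conj (W x) * Wxx x = - ∫ x in (0:ℝ)..1, conj (Wx x) * Wx x := by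
    have := intervalIntegral.integral_mul_deriv_eq_deriv_mul
      (u := fun x => conj (W x)) (u' := fun x => conj (Wx x)) (v := Wx) (v' := Wxx)
      (fun x hx => hasDerivAt_cconj (hdx x (by rwa [uIcc_of_le zero_le_one] at hx)))
      (fun x hx => hdxx x (by rwa [uIcc_of_le zero_le_one] at hx))
      hconjWxI hWxxI
    rw [this]
    simp [hbc0, hbc1]
  have hconjself : ∀ z : ℂ, conj z * z = ((‖z‖ ^ 2 : ℝ) : ℂ) := by
    intro z
    rw [mul_comm, Complex.mul_conj, Complex.normSq_eq_norm_sq]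
  have hIBP2 : ∫ x in (0:ℝ)..1, conj (W x) * Wxx x = -((r : ℝ) : ℂ) := by
    rw [hIBP]
    congr 1
    simp_rw [hconjself]
    rw [intervalIntegral.integral_ofReal]
  have hT1 : (∫ x in (0:ℝ)..1, f1 x) = -2*β*r := by
    have hmulI : IntervalIntegrable (fun x => ((Complex.I + (β:ℂ)) * Wxx x) * conj (W x)) volume 0 1 :=
      (((continuousOn_const.mul hWxxC).mul hconjW)).intervalIntegrable_of_Icc zero_le_one
    have e1 : (∫ x in (0:ℝ)..1, f1 x)
        = 2 * (∫ x in (0:ℝ)..1, ((Complex.I + (β:ℂ)) * Wxx x) * conj (W x)).re := by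
      rw [hf1def, intervalIntegral.integral_const_mul, _root_.intervalIntegral_re hmulI]
    have e2 : (∫ x in (0:ℝ)..1, ((Complex.I + (β:ℂ)) * Wxx x) * conj (W x))
        = (Complex.I + (β:ℂ)) * ∫ x in (0:ℝ)..1, conj (W x) * Wxx x := by
      rw [← intervalIntegral.integral_const_mul]
      congr 1; funext x; ring
    rw [e1, e2, hIBP2]
    simp [Complex.mul_re]
    ring
  have hPo : lam * E ≤ r := hP W Wx hdx hWxC hbc0 hbc1
  have hT1le : (∫ x in (0:ℝ)..1, f1 x) ≤ -2*β*lam*E := by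
    rw [hT1]
    nlinarith [hPo, hβ]
  -- terms 2,3 : dissipativity
  have hT2 : (∫ x in (0:ℝ)..1, f2 x) ≤ 0 := by
    have : (∫ x in (0:ℝ)..1, f2 x) ≤ ∫ _x in (0:ℝ)..1, (0:ℝ) :=
      intervalIntegral.integral_mono_on zero_le_one hf2I intervalIntegrable_const
        (fun x _ => by
          have h := cubic_dissip (a x) (b x)
          rw [← hW x] at h
          simp only [hf2def]
          linarith)
    simpa using this
  have hT3 : (∫ x in (0:ℝ)..1, f3 x) ≤ 0 := by
    have : (∫ x in (0:ℝ)..1, f3 x) ≤ ∫ _x in (0:ℝ)..1, (0:ℝ) :=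
      intervalIntegral.integral_mono_on zero_le_one hf3I intervalIntegrable_const
        (fun x _ => by
          have h := quintic_dissip (a x) (b x)
          rw [← hW x] at h
          simp only [hf3def]
          linarith)
    simpa using this
  -- term 4
  have hT4 : (∫ x in (0:ℝ)..1, f4 x) = 2*η*E := by
    have : f4 = fun x => 2*η * (‖W x‖^2) := by
      funext x
      simp only [hf4def]
      rw [mul_assoc, Complex.mul_conj, Complex.normSq_eq_norm_sq, ← Complex.ofReal_mul,
        Complex.ofReal_re]
      ring
    rw [this, intervalIntegral.integral_const_mul, hE]
  -- term 5 : Cauchy–Schwarz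
  have hT5 : (∫ x in (0:ℝ)..1, f5 x) ≤ 2 * dl * S := by
    have habsC : ContinuousOn (fun x => ‖Gd x‖) (Icc (0:ℝ) 1) :=
      continuous_norm.comp_continuousOn hGdC
    have habsWC : ContinuousOn (fun x => ‖W x‖) (Icc (0:ℝ) 1) :=
      continuous_norm.comp_continuousOn hWC
    have step1 : (∫ x in (0:ℝ)..1, f5 x)
        ≤ ∫ x in (0:ℝ)..1, 2 * (‖Gd x‖ * ‖W x‖) := by
      refine intervalIntegral.integral_mono_on zero_le_one hf5I
        ((continuousOn_const.mul (habsC.mul habsWC)).intervalIntegrable_of_Icc zero_le_one)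
        (fun x _ => ?_)
      have h1 : (Gd x * conj (W x)).re ≤ ‖Gd x * conj (W x)‖ := Complex.re_le_norm _
      rw [norm_mul, Complex.norm_conj] at h1
      simp only [hf5def]
      linarith
    have step2 : (∫ x in (0:ℝ)..1, 2 * (‖Gd x‖ * ‖W x‖))
        ≤ 2 * (dl * S) := by
      rw [intervalIntegral.integral_const_mul]
      have := CS01 habsC habsWC
      rw [hdl, hS, hE]
      nlinarith [this]
    linarith
  -- combine
  rw [hsplit]
  have hfinal : -2*β*lam*E + 2*η*E ≤ -2*(β*lam/2 - η) * E := by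
    nlinarith [mul_nonneg (mul_nonneg hβ.le hlam.le) hEnn]
  linarith

end AuxiliaryLemmas

open intervalIntegral Filter Topology ComplexConjugate in
set_option maxHeartbeats 1000000 in
/-- Comparison of two classical solutions with different forcings:
`‖u(t) - v(t)‖ ≤ e^{-αt}‖u(0) - v(0)‖ + ∫₀ᵗ e^{-α(t-s)} ‖g₁(s) - g₂(s)‖ ds`. -/
theorem forced_cqgl_L2_comparison
    (β η lam T : ℝ) (hβ : 0 < β) (hη : 0 < η) (hlam : 0 < lam) (hT : 0 < T)
    (hα : 0 < β * lam / 2 - η) (hP : PoincareHyp lam)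
    (g₁ g₂ : ℝ → ℝ → ℂ)
    (hg₁ : ContinuousOn (fun p : ℝ × ℝ => g₁ p.1 p.2) (Icc 0 T ×ˢ Icc 0 1))
    (hg₂ : ContinuousOn (fun p : ℝ × ℝ => g₂ p.1 p.2) (Icc 0 T ×ˢ Icc 0 1))
    (u v : ℝ → ℝ → ℂ)
    (hu : IsClassicalSolutionForcedCQGL β η T g₁ u)
    (hv : IsClassicalSolutionForcedCQGL β η T g₂ v)
    (t : ℝ) (ht : t ∈ Icc (0:ℝ) T) :
    Real.sqrt (∫ x in (0:ℝ)..1, ‖u t x - v t x‖^2)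
      ≤ Real.exp (-(β * lam / 2 - η) * t) *
          Real.sqrt (∫ x in (0:ℝ)..1, ‖u 0 x - v 0 x‖^2)
        + ∫ s in (0:ℝ)..t, Real.exp (-(β * lam / 2 - η) * (t - s)) *
            Real.sqrt (∫ x in (0:ℝ)..1, ‖g₁ s x - g₂ s x‖^2) := by
  obtain ⟨ut, ux, uxx, huC, hutC, huxC, huxxC, hut, hux, huxx, hupde, hubc⟩ := hu
  obtain ⟨vt, vx, vxx, hvC, hvtC, hvxC, hvxxC, hvt, hvx, hvxx, hvpde, hvbc⟩ := hv
  set αr := β * lam / 2 - η with hαr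
  set E : ℝ → ℝ := fun τ => ∫ x in (0:ℝ)..1, ‖u τ x - v τ x‖^2 with hEdef
  set dl : ℝ → ℝ := fun s =>
    Real.sqrt (∫ x in (0:ℝ)..1, ‖g₁ s x - g₂ s x‖^2) with hdldef
  show Real.sqrt (E t) ≤ Real.exp (-αr*t) * Real.sqrt (E 0)
      + ∫ s in (0:ℝ)..t, Real.exp (-αr*(t-s)) * dl s
  have hEnn : ∀ τ, 0 ≤ E τ := fun τ =>
    intervalIntegral.integral_nonneg zero_le_one (fun x _ => by positivity)
  have hdlnn : ∀ s, 0 ≤ dl s := fun s => Real.sqrt_nonneg _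
  -- continuity
  have hwC : ContinuousOn (fun p : ℝ × ℝ => u p.1 p.2 - v p.1 p.2) (Icc 0 T ×ˢ Icc 0 1) :=
    huC.sub hvC
  have hwtC : ContinuousOn (fun p : ℝ × ℝ => ut p.1 p.2 - vt p.1 p.2) (Icc 0 T ×ˢ Icc 0 1) :=
    hutC.sub hvtC
  have habs2C : ContinuousOn (fun p : ℝ × ℝ => ‖u p.1 p.2 - v p.1 p.2‖^2)
      (Icc 0 T ×ˢ Icc 0 1) := (continuous_norm.comp_continuousOn hwC).pow 2
  have hEcont : ContinuousOn E (Icc 0 T) :=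
    contOn_paramIntegral (f := fun τ x => ‖u τ x - v τ x‖^2) habs2C
  have hgd2C : ContinuousOn (fun p : ℝ × ℝ => ‖g₁ p.1 p.2 - g₂ p.1 p.2‖^2)
      (Icc 0 T ×ˢ Icc 0 1) := (continuous_norm.comp_continuousOn (hg₁.sub hg₂)).pow 2
  have hdlcont : ContinuousOn dl (Icc 0 T) :=
    Real.continuous_sqrt.comp_continuousOn
      (contOn_paramIntegral (f := fun s x => ‖g₁ s x - g₂ s x‖^2) hgd2C)
  rcases ht.1.eq_or_lt with h0 | h0
  · -- t = 0
    rw [← h0]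
    simp [intervalIntegral.integral_same]
  -- 0 < t
  have htT : t ≤ T := ht.2
  -- derivative of energy
  have hD : ∀ τ ∈ Ioo (0:ℝ) T, HasDerivAt E
      (∫ x in (0:ℝ)..1, 2 * ((ut τ x - vt τ x) * conj (u τ x - v τ x)).re) τ := by
    intro τ hτ
    refine hasDerivAt_paramIntegral (F := fun σ x => ‖u σ x - v σ x‖^2)
      (F' := fun σ x => 2 * ((ut σ x - vt σ x) * conj (u σ x - v σ x)).re) ?_ ?_ ?_ hτ
    · exact continuousOn_const.mul (Complex.continuous_re.comp_continuousOn
        (hwtC.mul (Complex.continuous_conj.comp_continuousOn hwC)))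
    · exact fun σ hσ => slice_cont (f := fun σ x => ‖u σ x - v σ x‖^2) habs2C hσ
    · intro σ hσ x hx
      have hw : HasDerivAt (fun σ' => u σ' x - v σ' x) (ut σ x - vt σ x) σ :=
        (hut σ hσ x hx).sub (hvt σ hσ x hx)
      have hm := hw.mul (hasDerivAt_cconj hw)
      have hre := hasDerivAt_cre hm
      have heq : (fun σ' => ((u σ' x - v σ' x) * conj (u σ' x - v σ' x)).re)
          = fun σ' => ‖u σ' x - v σ' x‖^2 := by
        funext σ'
        rw [Complex.mul_conj, Complex.normSq_eq_norm_sq, Complex.ofReal_re]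
      simp only [Pi.mul_apply] at hre
      rw [heq] at hre
      convert hre using 1
      simp [Complex.add_re, Complex.mul_re]
      ring
  -- energy derivative bound
  have hDle : ∀ τ ∈ Ioo (0:ℝ) T,
      (∫ x in (0:ℝ)..1, 2 * ((ut τ x - vt τ x) * conj (u τ x - v τ x)).re)
        ≤ -2*αr*(E τ) + 2 * dl τ * Real.sqrt (E τ) := by
    intro τ hτ
    have hτ' : τ ∈ Icc (0:ℝ) T := ⟨hτ.1.le, hτ.2.le⟩
    have hb := slice_D_bound hβ hη hlam hP
      (fun x => u τ x - v τ x) (fun x => ut τ x - vt τ x) (fun x => ux τ x - vx τ x)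
      (fun x => uxx τ x - vxx τ x) (fun x => g₁ τ x - g₂ τ x)
      (fun x => u τ x) (fun x => v τ x)
      (fun x => rfl)
      (slice_cont (f := fun σ x => u σ x) huC hτ') (slice_cont (f := fun σ x => v σ x) hvC hτ')
      (slice_cont (f := fun σ x => ut σ x - vt σ x) hwtC hτ')
      (slice_cont (f := fun σ x => ux σ x - vx σ x) (huxC.sub hvxC) hτ')
      (slice_cont (f := fun σ x => uxx σ x - vxx σ x) (huxxC.sub hvxxC) hτ')
      (slice_cont (f := fun σ x => g₁ σ x - g₂ σ x) (hg₁.sub hg₂) hτ')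
      (fun x hx => (hux τ hτ' x hx).sub (hvx τ hτ' x hx))
      (fun x hx => (huxx τ hτ' x hx).sub (hvxx τ hτ' x hx))
      (by beta_reduce; rw [(hubc τ hτ').1, (hvbc τ hτ').1, sub_zero])
      (by beta_reduce; rw [(hubc τ hτ').2, (hvbc τ hτ').2, sub_zero])
      (fun x hx => by beta_reduce; rw [hupde τ hτ x hx, hvpde τ hτ x hx]; ring)
    exact hb
  -- ε-regularised Grönwall argument
  have key : ∀ ε : ℝ, 0 < ε →
      Real.sqrt (E t) ≤ Real.exp (-αr*t) * (Real.sqrt (E 0) + ε)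
        + (∫ s in (0:ℝ)..t, Real.exp (-αr*(t-s)) * dl s) + αr*ε*T := by
    intro ε hε
    have hEpos : ∀ τ, 0 < E τ + ε^2 :=
      fun τ => add_pos_of_nonneg_of_pos (hEnn τ) (by positivity)
    set h : ℝ → ℝ := fun τ => Real.sqrt (E τ + ε^2) with hhdef
    have hhc : ContinuousOn h (Icc 0 T) :=
      Real.continuous_sqrt.comp_continuousOn (hEcont.add continuousOn_const)
    have hhpos : ∀ τ, 0 < h τ := fun τ => Real.sqrt_pos.mpr (hEpos τ)
    have hSH : ∀ τ, Real.sqrt (E τ) ≤ h τ :=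
      fun τ => Real.sqrt_le_sqrt (by nlinarith [sq_nonneg ε])
    have hεH : ∀ τ, ε ≤ h τ := fun τ => by
      have h2 := Real.sqrt_le_sqrt (show ε^2 ≤ E τ + ε^2 by nlinarith [hEnn τ])
      rwa [Real.sqrt_sq hε.le] at h2
    have hH2 : ∀ τ, h τ^2 = E τ + ε^2 := fun τ => Real.sq_sqrt (hEpos τ).le
    have hh' : ∀ τ ∈ Ioo (0:ℝ) T, HasDerivAt h
        ((∫ x in (0:ℝ)..1, 2 * ((ut τ x - vt τ x) * conj (u τ x - v τ x)).re) / (2 * h τ)) τ := by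
      intro τ hτ
      have h1 := (Real.hasDerivAt_sqrt (ne_of_gt (hEpos τ))).comp τ ((hD τ hτ).add_const (ε^2))
      refine (h1 : HasDerivAt h _ τ).congr_deriv ?_
      rw [hhdef]
      field_simp
    set ρ : ℝ → ℝ := fun s => Real.exp (αr*s) * (dl s + αr*ε) with hρdef
    have hρc : ContinuousOn ρ (Icc 0 T) :=
      (Real.continuous_exp.comp (continuous_const.mul continuous_id)).continuousOn.mul
        (hdlcont.add continuousOn_const)
    have hρI : ∀ τ' ∈ Icc (0:ℝ) T, IntervalIntegrable ρ volume 0 τ' := fun τ' hτ' =>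
      (hρc.mono (Icc_subset_Icc le_rfl hτ'.2)).intervalIntegrable_of_Icc hτ'.1
    set φ : ℝ → ℝ := fun τ => Real.exp (αr*τ) * h τ - ∫ s in (0:ℝ)..τ, ρ s with hφdef
    have hIccT : Icc (0:ℝ) t ⊆ Icc 0 T := Icc_subset_Icc le_rfl htT
    have hφc : ContinuousOn φ (Icc 0 t) := by
      apply ContinuousOn.sub
      · exact ((Real.continuous_exp.comp (continuous_const.mul continuous_id)).continuousOn).mul
          (hhc.mono hIccT)
      · have hprim := intervalIntegral.continuousOn_primitive_interval'
          (hρI t ⟨h0.le, htT⟩) (left_mem_uIcc (a := (0:ℝ)) (b := t))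
        rwa [uIcc_of_le h0.le] at hprim
    have hφd : ∀ τ ∈ Ioo (0:ℝ) t, ∃ d, HasDerivAt φ d τ ∧ d ≤ 0 := by
      intro τ hτ
      have hτT : τ ∈ Ioo (0:ℝ) T := ⟨hτ.1, lt_of_lt_of_le hτ.2 htT⟩
      have hexp : HasDerivAt (fun σ => Real.exp (αr*σ)) (αr * Real.exp (αr*τ)) τ := by
        have h1 : HasDerivAt (fun σ : ℝ => αr*σ) αr τ := by
          simpa using (hasDerivAt_id τ).const_mul αr
        have h2 := h1.exp
        convert h2 using 1
        ring
      have hprod := hexp.mul (hh' τ hτT)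
      have hψ : HasDerivAt (fun σ => ∫ s in (0:ℝ)..σ, ρ s) (ρ τ) τ := by
        refine intervalIntegral.integral_hasDerivAt_right (hρI τ ⟨hτ.1.le, hτT.2.le⟩) ?_ ?_
        · exact ContinuousOn.stronglyMeasurableAtFilter isOpen_Ioo (hρc.mono Ioo_subset_Icc_self) τ hτT
        · exact hρc.continuousAt (Icc_mem_nhds hτT.1 hτT.2)
      refine ⟨_, hprod.sub hψ, ?_⟩
      have harith : (∫ x in (0:ℝ)..1, 2 * ((ut τ x - vt τ x) * conj (u τ x - v τ x)).re)
          ≤ (dl τ + αr*ε - αr*h τ) * (2*h τ) := by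
        nlinarith [hDle τ hτT, mul_nonneg (hdlnn τ) (sub_nonneg.mpr (hSH τ)),
          mul_nonneg (mul_nonneg hα.le hε.le) (sub_nonneg.mpr (hεH τ)), hH2 τ,
          Real.sqrt_nonneg (E τ), hhpos τ]
      have hdiv : (∫ x in (0:ℝ)..1, 2 * ((ut τ x - vt τ x) * conj (u τ x - v τ x)).re) / (2*h τ)
          ≤ dl τ + αr*ε - αr*h τ := by
        rw [div_le_iff₀ (by nlinarith [hhpos τ])]
        exact harith
      have hρτ : ρ τ = Real.exp (αr*τ) * (dl τ + αr*ε) := rfl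
      rw [hρτ]
      nlinarith [mul_le_mul_of_nonneg_left hdiv (Real.exp_pos (αr*τ)).le]
    have hφanti : AntitoneOn φ (Icc 0 t) := by
      apply antitoneOn_of_deriv_nonpos (convex_Icc 0 t) hφc
      · intro τ hτ
        rw [interior_Icc] at hτ
        obtain ⟨d, hd, _⟩ := hφd τ hτ
        exact hd.differentiableAt.differentiableWithinAt
      · intro τ hτ
        rw [interior_Icc] at hτ
        obtain ⟨d, hd, hd0⟩ := hφd τ hτ
        rw [hd.deriv]
        exact hd0
    have hmono : φ t ≤ φ 0 :=
      hφanti (left_mem_Icc.mpr h0.le) (right_mem_Icc.mpr h0.le) h0.le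
    have hφ0 : φ 0 = h 0 := by
      simp only [hφdef]
      simp
    have hstep : h t ≤ Real.exp (-αr*t) * h 0 + Real.exp (-αr*t) * ∫ s in (0:ℝ)..t, ρ s := by
      have h1 : Real.exp (αr*t) * h t - (∫ s in (0:ℝ)..t, ρ s) ≤ h 0 := by
        rw [hφ0] at hmono
        exact hmono
      have h2 := mul_le_mul_of_nonneg_left h1 (Real.exp_pos (-αr*t)).le
      rw [mul_sub] at h2
      have h3 : Real.exp (-αr*t) * (Real.exp (αr*t) * h t) = h t := by
        rw [← mul_assoc, ← Real.exp_add]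
        norm_num
      linarith
    have hc0 : Continuous (fun s : ℝ => Real.exp (-αr*(t-s))) :=
      Real.continuous_exp.comp (continuous_const.mul (continuous_const.sub continuous_id))
    have hi1 : IntervalIntegrable (fun s => Real.exp (-αr*(t-s)) * dl s) volume 0 t := by
      refine ContinuousOn.intervalIntegrable_of_Icc h0.le ?_
      exact hc0.continuousOn.mul (hdlcont.mono hIccT)
    have hi2 : IntervalIntegrable (fun s => Real.exp (-αr*(t-s)) * (αr*ε)) volume 0 t := by
      refine ContinuousOn.intervalIntegrable_of_Icc h0.le ?_
      exact hc0.continuousOn.mul continuousOn_const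
    have hsplitρ : Real.exp (-αr*t) * (∫ s in (0:ℝ)..t, ρ s)
        = (∫ s in (0:ℝ)..t, Real.exp (-αr*(t-s)) * dl s)
          + ∫ s in (0:ℝ)..t, Real.exp (-αr*(t-s)) * (αr*ε) := by
      rw [← intervalIntegral.integral_const_mul, ← intervalIntegral.integral_add hi1 hi2]
      apply intervalIntegral.integral_congr
      intro s _
      have hρs : ρ s = Real.exp (αr*s) * (dl s + αr*ε) := rfl
      beta_reduce
      rw [hρs, ← mul_assoc, ← Real.exp_add,
        (show -αr*t + αr*s = -αr*(t-s) from by ring)]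
      ring
    have hsecond : (∫ s in (0:ℝ)..t, Real.exp (-αr*(t-s)) * (αr*ε)) ≤ αr*ε*T := by
      have hle : ∀ s ∈ Icc (0:ℝ) t, Real.exp (-αr*(t-s)) * (αr*ε) ≤ αr*ε := by
        intro s hs
        have h1 : Real.exp (-αr*(t-s)) ≤ 1 := by
          rw [← Real.exp_zero]
          exact Real.exp_le_exp.mpr (by nlinarith [hs.2, hα])
        nlinarith [mul_nonneg hα.le hε.le, Real.exp_pos (-αr*(t-s))]
      calc (∫ s in (0:ℝ)..t, Real.exp (-αr*(t-s)) * (αr*ε))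
          ≤ ∫ _s in (0:ℝ)..t, αr*ε :=
            intervalIntegral.integral_mono_on h0.le hi2 intervalIntegrable_const hle
      _ = αr*ε*t := by
            simp [intervalIntegral.integral_const]
            ring
      _ ≤ αr*ε*T := by nlinarith [mul_nonneg hα.le hε.le, htT]
    have hh0 : h 0 ≤ Real.sqrt (E 0) + ε := by
      have h1 : E 0 + ε^2 ≤ (Real.sqrt (E 0) + ε)^2 := by
        nlinarith [Real.sq_sqrt (hEnn 0), Real.sqrt_nonneg (E 0), hε.le]
      have h2 := Real.sqrt_le_sqrt h1
      rwa [Real.sqrt_sq (by positivity)] at h2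
    have hfin := mul_le_mul_of_nonneg_left hh0 (Real.exp_pos (-αr*t)).le
    calc Real.sqrt (E t) ≤ h t := hSH t
    _ ≤ Real.exp (-αr*t) * h 0 + Real.exp (-αr*t) * ∫ s in (0:ℝ)..t, ρ s := hstep
    _ = Real.exp (-αr*t) * h 0 + ((∫ s in (0:ℝ)..t, Real.exp (-αr*(t-s)) * dl s)
          + ∫ s in (0:ℝ)..t, Real.exp (-αr*(t-s)) * (αr*ε)) := by rw [hsplitρ]
    _ ≤ Real.exp (-αr*t) * (Real.sqrt (E 0) + ε)
          + (∫ s in (0:ℝ)..t, Real.exp (-αr*(t-s)) * dl s) + αr*ε*T := by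
        linarith [hsecond, hfin]
  -- let ε → 0
  have hαT : 0 < 1 + αr*T := by nlinarith
  apply le_of_forall_sub_le
  intro ε' hε'
  set ε := ε' / (1 + αr*T) with hεdef
  have hεpos : 0 < ε := div_pos hε' hαT
  have hk := key ε hεpos
  have hexple : Real.exp (-αr*t) ≤ 1 := by
    rw [← Real.exp_zero]
    exact Real.exp_le_exp.mpr (by nlinarith)
  have hεval : ε * (1 + αr*T) = ε' := by
    rw [hεdef]
    field_simp
  nlinarith [hk, hεval, hεpos.le, (Real.exp_pos (-αr*t)).le, hexple,
    mul_nonneg hα.le (mul_nonneg hεpos.le hT.le), Real.sqrt_nonneg (E 0)]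
end
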